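/- arXiv:2505.04563 — 6 statements merged into one kernel-verified Lean document; each statement's English description precedes it below -/
import Mathlib

section
/- Let K be a field, k ≥ 2, w ≥ 1, n = w + k + 1, and let (a_{s,i}) ∈ K^{(k-1)×n}. Then there exists a tame SL_k-frieze pattern of width w over K whose entries satisfy the recursion with coefficients (a_{s,i}) if and only if A_1 A_2 ⋯ A_n = (-1)^{k-1} I_k, where A_i are the companion-type matrices built from (a_{s,i}). -/
open scoped Classical

noncomputable section

namespace FriezeCount

variable (K : Type) [Field K]

/-- A tame `SL_k`-frieze pattern of width `w` over `K`, encoded as a family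
`e : ℤ → ℤ → K`, `(j, i) ↦ e_j(i)`, normalized to vanish for `j` outside
`{-(k-1), ..., n-1}` (where `n = w + k + 1`, so `n - 1 = w + k`):
the `k-1` bottom and top rows vanish, the rows `j = 0` and `j = w+1` consist of ones,
all `k × k` diamonds have determinant `1` and all `(k+1) × (k+1)` diamonds have
determinant `0` (whenever all the entries involved are defined). -/
def IsTameFrieze (k w : ℕ) (e : ℤ → ℤ → K) : Prop :=
  (∀ j i : ℤ, j ≤ -1 → e j i = 0) ∧
  (∀ j i : ℤ, (w : ℤ) + 2 ≤ j → e j i = 0) ∧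
  (∀ i : ℤ, e 0 i = 1) ∧
  (∀ i : ℤ, e ((w : ℤ) + 1) i = 1) ∧
  (∀ i j : ℤ, -((k : ℤ) - 1) ≤ j - ((k : ℤ) - 1) → j + ((k : ℤ) - 1) ≤ (w : ℤ) + (k : ℤ) →
    (Matrix.of fun r c : Fin k =>
      e (j + ((c : ℕ) : ℤ) - ((r : ℕ) : ℤ)) (i + ((r : ℕ) : ℤ))).det = 1) ∧
  (∀ i j : ℤ, -((k : ℤ) - 1) ≤ j - (k : ℤ) → j + (k : ℤ) ≤ (w : ℤ) + (k : ℤ) →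
    (Matrix.of fun r c : Fin (k + 1) =>
      e (j + ((c : ℕ) : ℤ) - ((r : ℕ) : ℤ)) (i + ((r : ℕ) : ℤ))).det = 0)

/-- The set `C_k(n)` of cyclic `n`-tuples of points in `ℙ^{k-1}(K)` such that any `k`
cyclically consecutive points are projectively independent. -/
def Ccal (k n : ℕ) : Set (ZMod n → Projectivization K (Fin k → K)) :=
  {v | ∀ i : ZMod n,
    Projectivization.Independent fun t : Fin k => v (i + ((t : ℕ) : ZMod n))}

/-- `V` is a lift of the tuple `v` of projective points. -/
def IsLift (k n : ℕ) (v : ZMod n → Projectivization K (Fin k → K))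
    (V : ZMod n → Fin k → K) : Prop :=
  ∀ i, ∃ h : V i ≠ 0, Projectivization.mk K (V i) h = v i

/-- `d_i = det(V_i, ..., V_{i+k-1})`, indices mod `n`. -/
def cycDet (k n : ℕ) (V : ZMod n → Fin k → K) (i : ZMod n) : K :=
  (Matrix.of fun r c : Fin k => V (i + ((r : ℕ) : ZMod n)) c).det

/-- The set `C_k^*(n)`: tuples of `C_k(n)` satisfying, for any lift and for each
`i ∈ {1, ..., g-1}` (`g = gcd(k,n)`), the relation
`d_i d_{i+g} ⋯ d_{i+n-g} = d_{i+1} d_{i+g+1} ⋯ d_{i+n-g+1}`.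
(When `g = 1` the condition is vacuous and this set is `C_k(n)`.) -/
def CstarSet (k n : ℕ) : Set (ZMod n → Projectivization K (Fin k → K)) :=
  {v | v ∈ Ccal K k n ∧ ∀ V : ZMod n → Fin k → K, IsLift K k n v V →
    ∀ i ∈ Finset.Icc 1 (Nat.gcd k n - 1),
      (∏ s ∈ Finset.range (n / Nat.gcd k n),
        cycDet K k n V (((i + s * Nat.gcd k n : ℕ)) : ZMod n)) =
      ∏ s ∈ Finset.range (n / Nat.gcd k n),
        cycDet K k n V (((i + 1 + s * Nat.gcd k n : ℕ)) : ZMod n)}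

/-- The (anti-periodically) extended lift: `Ṽ_m = V_m` for `1 ≤ m ≤ n` and
`Ṽ_{n+i} = (-1)^{k-1} V_i` for `1 ≤ i ≤ k - 1`. -/
def signedExt (k n : ℕ) (V : ZMod n → Fin k → K) (m : ℕ) : Fin k → K :=
  if m ≤ n then V ((m : ℕ) : ZMod n) else ((-1 : K) ^ (k - 1)) • V ((m : ℕ) : ZMod n)

/-- The lift `V` has constant consecutive determinants:
`det(Ṽ_i, ..., Ṽ_{i+k-1})` is the same for all `i = 1, ..., n`. -/
def HasConstConsecDets (k n : ℕ) (V : ZMod n → Fin k → K) : Prop :=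
  ∀ i ∈ Finset.Icc 1 n, ∀ i' ∈ Finset.Icc 1 n,
    (Matrix.of fun (r : Fin k) (c : Fin k) => signedExt K k n V (i + (r : ℕ)) c).det =
    (Matrix.of fun (r : Fin k) (c : Fin k) => signedExt K k n V (i' + (r : ℕ)) c).det

/-- The coefficient relation (basis expansion along the tuple):
`Ṽ_i = Σ_{j=1}^{k-1} (-1)^{j-1} a_{k-j, i+j-1} Ṽ_{i+j} + (-1)^{k-1} Ṽ_{i+k}` for `i ∈ [n]`,
where `Ṽ` is the signed extension of the lift `V` and `a_s` corresponds to `a ⟨s-1⟩`. -/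
def CoeffRel (k n : ℕ) (V : ZMod n → Fin k → K)
    (a : Fin (k - 1) → ZMod n → K) : Prop :=
  ∀ i ∈ Finset.Icc 1 n,
    signedExt K k n V i =
      (∑ t : Fin (k - 1),
        ((-1 : K) ^ (t : ℕ) * a ⟨k - 2 - (t : ℕ), by have := t.isLt; omega⟩
            (((i + (t : ℕ) : ℕ)) : ZMod n)) • signedExt K k n V (i + (t : ℕ) + 1))
      + ((-1 : K) ^ (k - 1)) • signedExt K k n V (i + k)

/-- The set `Coeff(v)` of coefficient matrices arising from lifts of `v` with
constant consecutive determinants. -/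
def CoeffSet (k n : ℕ) (v : ZMod n → Projectivization K (Fin k → K)) :
    Set (Fin (k - 1) → ZMod n → K) :=
  {a | ∃ V : ZMod n → Fin k → K,
    IsLift K k n v V ∧ HasConstConsecDets K k n V ∧ CoeffRel K k n V a}

/-- Companion-type matrix `A_i` built from the coefficients `(a_{s,i})`: first row
`(a_{k-1,i}, -a_{k-2,i+1}, ..., (-1)^{k-2} a_{1,i+k-2}, (-1)^{k-1})`, ones on the
subdiagonal, zeros elsewhere (`a_s` corresponds to `a ⟨s-1⟩`). -/
def companion (k n : ℕ) (a : Fin (k - 1) → ZMod n → K) (i : ZMod n) :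
    Matrix (Fin k) (Fin k) K :=
  Matrix.of fun r c =>
    if (r : ℕ) = 0 then
      if h : (c : ℕ) < k - 1 then
        (-1 : K) ^ (c : ℕ) * a ⟨k - 2 - (c : ℕ), by omega⟩ (i + ((c : ℕ) : ZMod n))
      else (-1 : K) ^ (k - 1)
    else if (r : ℕ) = (c : ℕ) + 1 then 1 else 0

/-- The ordered product `A_1 A_2 ⋯ A_n`. -/
def friezeProd (k n : ℕ) (a : Fin (k - 1) → ZMod n → K) : Matrix (Fin k) (Fin k) K :=
  ((List.range n).map fun i => companion K k n a (((i + 1 : ℕ)) : ZMod n)).prod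

/-- The entries `e` satisfy the recursion with coefficients `(a_{s,i})`:
`e_j(i) = Σ_{t=0}^{k-2} (-1)^t a_{k-1-t, i+t} e_{j-t-1}(i+t+1) + (-1)^{k-1} e_{j-k}(i+k)`
for all `i ∈ ℤ` and all `j` with `0 ≤ j ≤ n-1` for which all the entries involved are
defined (i.e. `1 ≤ j ≤ n-1`); `a_s` corresponds to `a ⟨s-1⟩`, second index mod `n`. -/
def SatisfiesRecursion (k n : ℕ) (e : ℤ → ℤ → K)
    (a : Fin (k - 1) → ZMod n → K) : Prop :=
  ∀ i j : ℤ, 1 ≤ j → j ≤ (n : ℤ) - 1 →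
    e j i =
      (∑ t : Fin (k - 1),
        (-1 : K) ^ (t : ℕ) * a ⟨k - 2 - (t : ℕ), by have := t.isLt; omega⟩
            ((i + (t : ℕ) : ℤ) : ZMod n) * e (j - (t : ℕ) - 1) (i + (t : ℕ) + 1))
      + (-1 : K) ^ (k - 1) * e (j - (k : ℕ)) (i + (k : ℕ))

/-- The projective general linear group `PGL(k, K) = GL(k, K) / center`. -/
def PGL (k : ℕ) : Type _ :=
  GL (Fin k) K ⧸ Subgroup.center (GL (Fin k) K)

instance (k : ℕ) : Group (PGL K k) :=
  inferInstanceAs (Group (GL (Fin k) K ⧸ Subgroup.center (GL (Fin k) K)))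

/-- The action of `A ∈ GL(k, K)` on the projective space `ℙ^{k-1}(K)`. -/
def glProj (k : ℕ) (A : GL (Fin k) K) :
    Projectivization K (Fin k → K) → Projectivization K (Fin k → K) :=
  Projectivization.map
    ((LinearMap.GeneralLinearGroup.generalLinearEquiv K (Fin k → K)
        (Matrix.GeneralLinearGroup.toLin A)) : (Fin k → K) →ₗ[K] (Fin k → K))
    (LinearMap.GeneralLinearGroup.generalLinearEquiv K (Fin k → K)
        (Matrix.GeneralLinearGroup.toLin A)).injective

/-- The stabilizer of a tuple `v` of projective points under the (diagonal) action
of `PGL(k, K)`; since the center of `GL(k, K)` acts trivially on projective space,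
this is the set of classes of matrices `A ∈ GL(k, K)` fixing each `v_i`. -/
def pglStab (k n : ℕ) (v : ZMod n → Projectivization K (Fin k → K)) :
    Set (PGL K k) :=
  {g | ∃ A : GL (Fin k) K, (QuotientGroup.mk A : PGL K k) = g ∧
        ∀ i, glProj K k A (v i) = v i}

/-- `(U_1, ..., U_r)` is a decomposition with respect to the lift `V`:
the `U_j` are nonzero, `K^k = U_1 ⊕ ⋯ ⊕ U_r`, and every `V_i` lies in some `U_j`. -/
def IsDecompOfLift (k n : ℕ) (V : ZMod n → Fin k → K) {r : ℕ}
    (U : Fin r → Submodule K (Fin k → K)) : Prop :=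
  (∀ j, U j ≠ ⊥) ∧ iSupIndep U ∧ (⨆ j, U j) = ⊤ ∧ ∀ i, ∃ j, V i ∈ U j

/-- `(U_1, ..., U_r)` is a decomposition of the tuple `v` of projective points
(this does not depend on the choice of the lift). -/
def IsDecompOf (k n : ℕ) (v : ZMod n → Projectivization K (Fin k → K)) {r : ℕ}
    (U : Fin r → Submodule K (Fin k → K)) : Prop :=
  ∀ V : ZMod n → Fin k → K, IsLift K k n v V → IsDecompOfLift K k n V U

/-- A decomposition is maximal if no member `U_j` can be split as a direct sum
`U_j = W₁ ⊕ W₂` of nonzero subspaces in such a way that replacing `U_j` by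
`W₁, W₂` again yields a decomposition of `v`. -/
def IsMaxDecompOf (k n : ℕ) (v : ZMod n → Projectivization K (Fin k → K)) {r : ℕ}
    (U : Fin r → Submodule K (Fin k → K)) : Prop :=
  IsDecompOf K k n v U ∧
    ∀ (j : Fin r) (W₁ W₂ : Submodule K (Fin k → K)), W₁ ≠ ⊥ → W₂ ≠ ⊥ →
      Disjoint W₁ W₂ → W₁ ⊔ W₂ = U j →
      ¬ ∀ (V : ZMod n → Fin k → K), IsLift K k n v V →
        ∀ i, (∃ l, l ≠ j ∧ V i ∈ U l) ∨ V i ∈ W₁ ∨ V i ∈ W₂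

/-- The triple `{v_i, v_{i+1}, v_{i+2}}` (indices mod `n`) is projectively independent. -/
def tripleIndep (n : ℕ) (v : ZMod n → Projectivization K (Fin 3 → K)) (i : ℕ) : Prop :=
  Projectivization.Independent fun t : Fin 3 => v (((i + (t : ℕ) : ℕ)) : ZMod n)

/-- The set `C_3^{s₁ s₂}(n)`; `s₁ s₂ : Bool`, with `true` standing for `+`:
tuples with `v_n ≠ v_1` such that the triple at `i` is independent exactly for
`i ∈ I_{s₁,s₂} = {1,...,n-2} ∪ {n-1 if s₁ = +} ∪ {n if s₂ = +}`. -/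
def C3s (n : ℕ) (s₁ s₂ : Bool) : Set (ZMod n → Projectivization K (Fin 3 → K)) :=
  {v | v ((n : ℕ) : ZMod n) ≠ v ((1 : ℕ) : ZMod n) ∧
    (∀ i : ℕ, 1 ≤ i → i ≤ n - 2 → tripleIndep K n v i) ∧
    (tripleIndep K n v (n - 1) ↔ s₁ = true) ∧
    (tripleIndep K n v n ↔ s₂ = true)}

/-!
For a pattern `e` write `v_j(i) = (e_j(i), e_{j-1}(i+1), …, e_{j-k+1}(i+k-1))` for its diagonals
and `P_i(l) = A_i A_{i+1} ⋯ A_{i+l-1}`. The recursion says exactly that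
`v_{j+1}(i) = A_i v_j(i+1)`; the bottom rows say `v_0(i) = e₁`, so `v_j(i) = P_i(j) e₁`, and the
top rows say `v_{n-1}(i) = e_k`. Since `A_i e_k = (-1)^{k-1} e₁`, the top rows amount to every
monodromy `P_i(n)` fixing `e₁` up to the sign `(-1)^{k-1}`. As the `A_i` are `n`-periodic,
`P_1(n) P_1(c) = P_1(c) P_{1+c}(n)`, and the vectors `P_1(c) e₁`, `c < k`, are the columns of the
unitriangular diamond at `(1, 0)`; so this holds iff `P_1(n) = (-1)^{k-1} I`. Conversely
`e_j(i) = P_i(j)₁₁` builds the pattern from the coefficients. The determinant conditions come for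
free: a `k × k` diamond is a product of companion matrices, of determinant `1`, with a
unitriangular diamond, and the recursion writes the first row of a `(k+1) × (k+1)` diamond as a
combination of the other rows.
-/

open Matrix

section Companion

variable {K : Type} [Field K] {m n : ℕ} (a : Fin m → ZMod n → K)

theorem companion_mulVec_zero (i : ZMod n) (x : Fin (m + 1) → K) :
    (companion K (m + 1) n a i *ᵥ x) 0 =
      (∑ t : Fin m, (-1 : K) ^ (t : ℕ) * a ⟨m + 1 - 2 - t, by omega⟩ (i + (t : ℕ)) *
        x t.castSucc) + (-1 : K) ^ m * x (Fin.last m) := by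
  simp [mulVec, dotProduct, Fin.sum_univ_castSucc, companion]

theorem companion_succ_apply (i : ZMod n) (s : Fin m) (c : Fin (m + 1)) :
    companion K (m + 1) n a i s.succ c = if c = s.castSucc then 1 else 0 := by
  rw [companion, of_apply, if_neg (by simp)]
  exact if_congr (by simp [Fin.ext_iff]; omega) rfl rfl

theorem companion_mulVec_succ (i : ZMod n) (x : Fin (m + 1) → K) (s : Fin m) :
    (companion K (m + 1) n a i *ᵥ x) s.succ = x s.castSucc := by
  simp [mulVec, dotProduct, companion_succ_apply]

theorem companion_mulVec_single_last (i : ZMod n) :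
    companion K (m + 1) n a i *ᵥ Pi.single (Fin.last m) 1 = (-1 : K) ^ m • Pi.single 0 1 := by
  ext r
  cases r using Fin.cases with
  | zero => simp [companion]
  | succ s => simp [companion_succ_apply, (Fin.castSucc_ne_last s).symm]

theorem det_companion (i : ZMod n) : (companion K (m + 1) n a i).det = 1 := by
  have minor : (companion K (m + 1) n a i).submatrix Fin.succ Fin.castSucc = 1 := by
    ext s t
    simp [companion_succ_apply, one_apply, eq_comm]
  rw [det_succ_column _ (Fin.last m), Finset.sum_eq_single 0]
  · simp only [Fin.succAbove_zero, Fin.succAbove_last, minor, det_one]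
    simp [companion, ← pow_add]
  · intro r _ hr
    obtain ⟨s, rfl⟩ := Fin.exists_succ_eq.2 hr
    simp [companion_succ_apply, (Fin.castSucc_ne_last s).symm]
  · simp

def companionProd (i : ZMod n) (len : ℕ) : Matrix (Fin (m + 1)) (Fin (m + 1)) K :=
  ((List.range len).map fun s : ℕ => companion K (m + 1) n a (i + s)).prod

@[simp]
theorem companionProd_zero (i : ZMod n) : companionProd a i 0 = 1 := rfl

theorem companionProd_succ (i : ZMod n) (len : ℕ) :
    companionProd a i (len + 1) = companion K (m + 1) n a i * companionProd a (i + 1) len := by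
  rw [companionProd, List.range_succ_eq_map, List.map_cons, List.prod_cons, List.map_map,
    Nat.cast_zero, add_zero, companionProd]
  congr 3
  funext s
  simp [add_assoc, add_comm (1 : ZMod n)]

theorem companionProd_add (i : ZMod n) (s t : ℕ) :
    companionProd a i (s + t) = companionProd a i s * companionProd a (i + s) t := by
  rw [companionProd, List.range_add, List.map_append, List.prod_append, List.map_map,
    ← companionProd, companionProd]
  congr 3
  funext u
  simp [add_assoc]

theorem det_companionProd (i : ZMod n) (len : ℕ) : (companionProd a i len).det = 1 := by
  induction len generalizing i with
  | zero => simp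
  | succ len ih => rw [companionProd_succ, det_mul, det_companion, ih, one_mul]

theorem friezeProd_eq_companionProd : friezeProd K (m + 1) n a = companionProd a 1 n := by
  rw [friezeProd, companionProd]
  congr 2
  funext s
  simp [add_comm]

theorem companionProd_mul_eq_mul_companionProd (i : ZMod n) (r : ℕ) :
    companionProd a i n * companionProd a i r =
      companionProd a i r * companionProd a (i + r) n := by
  have h := companionProd_add a i n r
  rw [add_comm n r, companionProd_add, ZMod.natCast_self, add_zero] at h
  exact h.symm

theorem companionProd_eq_smul_one_of_eq_at_one [NeZero n] {c : K}
    (h : companionProd a 1 n = c • 1) (i : ZMod n) : companionProd a i n = c • 1 := by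
  obtain ⟨r, rfl⟩ : ∃ r : ℕ, 1 + (r : ZMod n) = i := ⟨(i - 1).val, by simp⟩
  have hunit : IsUnit (companionProd a 1 r) :=
    (isUnit_iff_isUnit_det _).2 (by simp [det_companionProd])
  refine hunit.mul_left_cancel ?_
  rw [← companionProd_mul_eq_mul_companionProd, h, smul_mul_assoc, one_mul, mul_smul_comm, mul_one]

theorem companionProd_pred_mulVec_single_zero [NeZero n] (i : ZMod n)
    (h : companionProd a i n = (-1 : K) ^ m • 1) :
    companionProd a i (n - 1) *ᵥ Pi.single 0 1 = Pi.single (Fin.last m) 1 := by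
  have hsplit := companionProd_add a i (n - 1) 1
  rw [Nat.sub_add_cancel NeZero.one_le, h, companionProd_succ, companionProd_zero,
    mul_one] at hsplit
  have := congrArg (· *ᵥ Pi.single (Fin.last m) (1 : K)) hsplit
  simp only [smul_mulVec, one_mulVec, ← mulVec_mulVec, companion_mulVec_single_last,
    mulVec_smul] at this
  exact smul_right_injective _ (pow_ne_zero m (neg_ne_zero.2 one_ne_zero)) this.symm

end Companion

section Frieze

variable {K : Type} {m n : ℕ}

def diagVec (p : ℕ) (e : ℤ → ℤ → K) (i j : ℤ) : Fin p → K :=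
  fun r => e (j - r) (i + r)

def diamond (p : ℕ) (e : ℤ → ℤ → K) (i j : ℤ) : Matrix (Fin p) (Fin p) K :=
  of fun r c => e (j + (c : ℕ) - (r : ℕ)) (i + (r : ℕ))

theorem diagVec_succ_succ (e : ℤ → ℤ → K) (i j : ℤ) (s : Fin m) :
    diagVec (m + 1) e i (j + 1) s.succ = diagVec (m + 1) e (i + 1) j s.castSucc := by
  simp only [diagVec, Fin.val_succ, Fin.val_castSucc]
  congr 1 <;> push_cast <;> ring

variable [Field K] {e : ℤ → ℤ → K}

theorem diagVec_zero (hlow : ∀ j i : ℤ, j ≤ -1 → e j i = 0)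
    (hzero : ∀ i : ℤ, e 0 i = 1) (i : ℤ) : diagVec (m + 1) e i 0 = Pi.single 0 1 := by
  ext r
  cases r using Fin.cases with
  | zero => simpa [diagVec] using hzero i
  | succ s => simpa [diagVec] using hlow _ _ (by omega)

theorem diagVec_eq_single_last_iff {w : ℕ} :
    (∀ i, diagVec (m + 1) e i (w + m + 1) = Pi.single (Fin.last m) 1) ↔
      (∀ i, e (w + 1) i = 1) ∧ ∀ j i : ℤ, w + 2 ≤ j → j ≤ w + m + 1 → e j i = 0 := by
  have hw : (w : ℤ) + m + 1 - m = w + 1 := by ring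
  constructor
  · intro h
    refine ⟨fun i => ?_, fun j i hj hj' => ?_⟩
    · simpa [diagVec, hw] using congrFun (h (i - m)) (Fin.last m)
    · obtain ⟨r, hr⟩ : ∃ r : ℕ, w + m + 1 - j = r := Int.eq_ofNat_of_zero_le (by omega)
      have := congrFun (h (i - r)) (Fin.castSucc ⟨r, by omega⟩)
      simp only [diagVec, Fin.val_castSucc, Pi.single_apply, Fin.castSucc_ne_last,
        if_false] at this
      rw [← this]
      congr 1 <;> omega
  · rintro ⟨htop1, htop0⟩ i
    ext r
    cases r using Fin.lastCases with
    | last => simpa [diagVec, hw] using htop1 (i + m)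
    | cast s =>
      simpa [diagVec, Fin.castSucc_ne_last] using htop0 _ _ (by omega) (by omega)

theorem det_diamond_zero {p : ℕ} (hlow : ∀ j i : ℤ, j ≤ -1 → e j i = 0)
    (hzero : ∀ i : ℤ, e 0 i = 1) (i : ℤ) : (diamond p e i 0).det = 1 := by
  rw [det_of_isUpperTriangular]
  · simp [diamond, hzero]
  · intro r c hcr
    have : (c : ℕ) < r := hcr
    simpa [diamond] using hlow _ _ (by omega)

variable (a : Fin m → ZMod n → K)

-- Stated in the exact shape of `SatisfiesRecursion K (m + 1) n e a` at `(i, j + 1)`.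
theorem companion_mulVec_diagVec_zero (i j : ℤ) :
    (companion K (m + 1) n a i *ᵥ diagVec (m + 1) e (i + 1) j) 0 =
      (∑ t : Fin (m + 1 - 1),
        (-1 : K) ^ (t : ℕ) * a ⟨m + 1 - 2 - (t : ℕ), by have := t.isLt; omega⟩
            ((i + (t : ℕ) : ℤ) : ZMod n) * e (j + 1 - (t : ℕ) - 1) (i + (t : ℕ) + 1))
      + (-1 : K) ^ (m + 1 - 1) * e (j + 1 - ((m + 1 : ℕ) : ℤ)) (i + ((m + 1 : ℕ) : ℤ)) := by
  rw [companion_mulVec_zero]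
  simp only [diagVec, Fin.val_castSucc, Fin.val_last, Int.cast_add, Int.cast_natCast,
    Nat.add_sub_cancel]
  congr 1
  · refine Finset.sum_congr rfl fun t _ => ?_
    congr 2 <;> ring
  · congr 2 <;> push_cast <;> ring

theorem satisfiesRecursion_iff :
    SatisfiesRecursion K (m + 1) n e a ↔
      ∀ i j : ℤ, 0 ≤ j → j + 1 < n →
        diagVec (m + 1) e i (j + 1) =
          companion K (m + 1) n a i *ᵥ diagVec (m + 1) e (i + 1) j := by
  have hrow : ∀ i j : ℤ, diagVec (m + 1) e i (j + 1) =
      companion K (m + 1) n a i *ᵥ diagVec (m + 1) e (i + 1) j ↔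
        e (j + 1) i = (companion K (m + 1) n a i *ᵥ diagVec (m + 1) e (i + 1) j) 0 := by
    intro i j
    rw [funext_iff, Fin.forall_fin_succ]
    simp only [companion_mulVec_succ, diagVec_succ_succ, implies_true, and_true]
    simp [diagVec]
  constructor
  · intro h i j hj hj'
    rw [hrow, companion_mulVec_diagVec_zero]
    exact h i (j + 1) (by omega) (by omega)
  · intro h i j hj hj'
    have := (hrow i (j - 1)).1 (h i (j - 1) (by omega) (by omega))
    rw [companion_mulVec_diagVec_zero, sub_add_cancel] at this
    exact this

variable {a}

theorem diagVec_add_eq_companionProd_mulVec (hrec : SatisfiesRecursion K (m + 1) n e a)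
    (i j : ℤ) (len : ℕ) (hj : 0 ≤ j) (hlen : j + len < n) :
    diagVec (m + 1) e i (j + len) = companionProd a i len *ᵥ diagVec (m + 1) e (i + len) j := by
  induction len generalizing i with
  | zero => simp
  | succ len ih =>
    have hstep := (satisfiesRecursion_iff a).1 hrec i (j + len) (by omega)
      (by push_cast at hlen; omega)
    rw [Nat.cast_succ, ← add_assoc, hstep, ih (i + 1) (by push_cast at hlen; omega),
      companionProd_succ, mulVec_mulVec]
    push_cast
    ring_nf

theorem diamond_eq_companionProd_mul (hrec : SatisfiesRecursion K (m + 1) n e a) (i : ℤ)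
    (j : ℕ) (hj : j + m < n) :
    diamond (m + 1) e i j = companionProd a i j * diamond (m + 1) e (i + j) 0 := by
  ext r c
  have := congrFun (diagVec_add_eq_companionProd_mulVec hrec i c j (by omega)
    (by have := c.isLt; omega)) r
  simp only [diagVec] at this
  simp only [diamond, of_apply, mul_apply, zero_add]
  rw [show (j : ℤ) + c - r = c + j - r by ring, this]
  rfl

theorem det_diamond_eq_one (hrec : SatisfiesRecursion K (m + 1) n e a)
    (hlow : ∀ j i : ℤ, j ≤ -1 → e j i = 0) (hzero : ∀ i : ℤ, e 0 i = 1) (i : ℤ) (j : ℕ)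
    (hj : j + m < n) : (diamond (m + 1) e i j).det = 1 := by
  rw [diamond_eq_companionProd_mul hrec i j hj, det_mul, det_companionProd,
    det_diamond_zero hlow hzero, one_mul]

theorem det_diamond_succ_eq_zero (hrec : SatisfiesRecursion K (m + 1) n e a) (i j : ℤ)
    (hj : 1 ≤ j) (hj' : j + m + 1 < n) : (diamond (m + 2) e i j).det = 0 := by
  rw [← exists_vecMul_eq_zero_iff]
  -- the recursion at `(i, j + c)` is a linear relation between the rows with these coefficients
  refine ⟨Fin.cons 1 (Fin.snoc (fun t : Fin m => -((-1 : K) ^ (t : ℕ) *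
      a ⟨m + 1 - 2 - t, by omega⟩ (i + (t : ℕ)))) (-(-1 : K) ^ m)),
    fun h => one_ne_zero (congrFun h 0), ?_⟩
  ext c
  have hc := congrFun ((satisfiesRecursion_iff a).1 hrec i (j + c - 1) (by omega)
    (by have := c.isLt; omega)) 0
  rw [companion_mulVec_zero] at hc
  simp only [vecMul, dotProduct, Pi.zero_apply]
  rw [Fin.sum_univ_succ, Fin.sum_univ_castSucc]
  simp only [Fin.cons_zero, Fin.cons_succ, Fin.snoc_castSucc, Fin.snoc_last, diamond, diagVec,
    of_apply, Fin.val_succ, Fin.val_castSucc, Fin.val_last, Fin.val_zero, Nat.cast_add,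
    Nat.cast_one, Nat.cast_zero, sub_zero, add_zero, one_mul, sub_add_eq_sub_sub, ← add_assoc,
    neg_mul, Finset.sum_neg_distrib, sub_add_cancel, add_right_comm _ (1 : ℤ)] at hc ⊢
  simp only [sub_right_comm _ (1 : ℤ)] at hc
  linear_combination hc

theorem isTameFrieze_of_boundary {w : ℕ} (hn : n = w + m + 2)
    (hrec : SatisfiesRecursion K (m + 1) n e a) (hlow : ∀ j i : ℤ, j ≤ -1 → e j i = 0)
    (hzero : ∀ i : ℤ, e 0 i = 1) (htop1 : ∀ i : ℤ, e (w + 1) i = 1)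
    (htop0 : ∀ j i : ℤ, w + 2 ≤ j → e j i = 0) : IsTameFrieze K (m + 1) w e := by
  refine ⟨hlow, htop0, hzero, htop1, fun i j hj hj' => ?_, fun i j hj hj' => ?_⟩
  · obtain ⟨j, rfl⟩ := Int.eq_ofNat_of_zero_le (a := j) (by push_cast at hj; omega)
    exact det_diamond_eq_one hrec hlow hzero i j (by push_cast at hj'; omega)
  · exact det_diamond_succ_eq_zero hrec i j (by push_cast at hj; omega)
      (by push_cast at hj'; omega)

theorem diagVec_eq_companionProd_mulVec_single (hrec : SatisfiesRecursion K (m + 1) n e a)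
    (hlow : ∀ j i : ℤ, j ≤ -1 → e j i = 0) (hzero : ∀ i : ℤ, e 0 i = 1) (i : ℤ) (c : ℕ)
    (hc : c < n) : diagVec (m + 1) e i c = companionProd a i c *ᵥ Pi.single 0 1 := by
  simpa [diagVec_zero hlow hzero] using
    diagVec_add_eq_companionProd_mulVec hrec i 0 c le_rfl (by omega)

theorem companionProd_mulVec_single_zero [NeZero n]
    (hrec : SatisfiesRecursion K (m + 1) n e a) (hlow : ∀ j i : ℤ, j ≤ -1 → e j i = 0)
    (hzero : ∀ i : ℤ, e 0 i = 1)
    (htop : ∀ i, diagVec (m + 1) e i (n - 1) = Pi.single (Fin.last m) 1) (i : ℤ) :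
    companionProd a i n *ᵥ Pi.single 0 1 = (-1 : K) ^ m • Pi.single 0 1 := by
  have hcol := diagVec_eq_companionProd_mulVec_single hrec hlow hzero (i + 1) (n - 1)
    (Nat.sub_lt (Nat.pos_of_neZero n) one_pos)
  rw [Nat.cast_pred (Nat.pos_of_neZero n), htop] at hcol
  have hsplit := companionProd_succ a i (n - 1)
  rw [Nat.sub_add_cancel NeZero.one_le] at hsplit
  rw [hsplit, ← mulVec_mulVec,
    show (i : ZMod n) + 1 = ((i + 1 : ℤ) : ZMod n) by push_cast; rfl, ← hcol,
    companion_mulVec_single_last]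

theorem companionProd_eq_smul_one_of_mulVec_single_zero (hmn : m < n)
    (hrec : SatisfiesRecursion K (m + 1) n e a) (hlow : ∀ j i : ℤ, j ≤ -1 → e j i = 0)
    (hzero : ∀ i : ℤ, e 0 i = 1) {c : K}
    (hfix : ∀ i : ℤ, companionProd a i n *ᵥ Pi.single 0 1 = c • Pi.single 0 1) :
    companionProd a 1 n = c • 1 := by
  have hcol : ∀ r : Fin (m + 1),
      (fun s => diamond (m + 1) e 1 0 s r) = companionProd a 1 r *ᵥ Pi.single 0 1 := by
    intro r
    have := diagVec_eq_companionProd_mulVec_single hrec hlow hzero 1 r (by omega)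
    rw [Int.cast_one] at this
    rw [← this]
    ext s
    simp [diamond, diagVec]
  have hD : companionProd a 1 n * diamond (m + 1) e 1 0 = (c • 1) * diamond (m + 1) e 1 0 := by
    ext s r
    rw [smul_mul, one_mul, Matrix.smul_apply, smul_eq_mul]
    change (companionProd a 1 n *ᵥ fun s => diamond (m + 1) e 1 0 s r) s =
      c * (fun s => diamond (m + 1) e 1 0 s r) s
    have hfix' := hfix (1 + (r : ℕ))
    push_cast at hfix'
    rw [hcol, mulVec_mulVec, companionProd_mul_eq_mul_companionProd, ← mulVec_mulVec, hfix',
      mulVec_smul]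
    rfl
  have hunit : IsUnit (diamond (m + 1) e 1 0) :=
    (isUnit_iff_isUnit_det _).2 (by rw [det_diamond_zero hlow hzero]; exact isUnit_one)
  exact hunit.mul_right_cancel hD

theorem companionProd_eq_of_isTameFrieze {w : ℕ} (hn : n = w + m + 2)
    (he : IsTameFrieze K (m + 1) w e) (hrec : SatisfiesRecursion K (m + 1) n e a) :
    companionProd a 1 n = (-1 : K) ^ m • 1 := by
  obtain ⟨hlow, htop0, hzero, htop1, -, -⟩ := he
  have : NeZero n := ⟨by omega⟩
  have htop : ∀ i, diagVec (m + 1) e i (n - 1) = Pi.single (Fin.last m) 1 := by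
    rw [show (n : ℤ) - 1 = w + m + 1 by omega]
    exact diagVec_eq_single_last_iff.2 ⟨htop1, fun j i hj _ => htop0 j i hj⟩
  exact companionProd_eq_smul_one_of_mulVec_single_zero (by omega) hrec hlow hzero
    (companionProd_mulVec_single_zero hrec hlow hzero htop)

end Frieze

section Construction

variable {K : Type} [Field K] {m n : ℕ} (a : Fin m → ZMod n → K)

def friezeOf (j i : ℤ) : K :=
  if 0 ≤ j ∧ j < n then companionProd a i j.toNat 0 0 else 0

theorem friezeOf_eq_zero {j : ℤ} (hj : ¬(0 ≤ j ∧ j < n)) (i : ℤ) : friezeOf a j i = 0 :=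
  if_neg hj

theorem friezeOf_zero [NeZero n] (i : ℤ) : friezeOf a 0 i = 1 := by
  simp [friezeOf, Nat.pos_of_neZero n]

theorem diagVec_friezeOf (i : ℤ) (j : ℕ) (hj : j < n) :
    diagVec (m + 1) (friezeOf a) i j = companionProd a i j *ᵥ Pi.single 0 1 := by
  induction j generalizing i with
  | zero =>
    have : NeZero n := ⟨by omega⟩
    rw [Nat.cast_zero, diagVec_zero (e := friezeOf a)
      (fun j i hj => friezeOf_eq_zero a (by omega) i) (friezeOf_zero a), companionProd_zero,
      one_mulVec]
  | succ j ih =>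
    ext r
    cases r using Fin.cases with
    | zero =>
      rw [diagVec, friezeOf, if_pos (by simp; omega)]
      simp
    | succ s =>
      rw [Nat.cast_succ, diagVec_succ_succ, ih (i + 1) (by omega), companionProd_succ,
        ← mulVec_mulVec, companion_mulVec_succ]
      push_cast
      rfl

theorem satisfiesRecursion_friezeOf : SatisfiesRecursion K (m + 1) n (friezeOf a) a := by
  refine (satisfiesRecursion_iff a).2 fun i j hj hj' => ?_
  obtain ⟨j, rfl⟩ := Int.eq_ofNat_of_zero_le hj
  rw [← Nat.cast_succ, diagVec_friezeOf a i _ (by omega), diagVec_friezeOf a _ _ (by omega),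
    companionProd_succ, mulVec_mulVec]
  push_cast
  rfl

theorem isTameFrieze_friezeOf {w : ℕ} (hn : n = w + m + 2)
    (h : companionProd a 1 n = (-1 : K) ^ m • 1) : IsTameFrieze K (m + 1) w (friezeOf a) := by
  have : NeZero n := ⟨by omega⟩
  have htop := (diagVec_eq_single_last_iff (m := m) (w := w)).1 fun i => by
    rw [show (w : ℤ) + m + 1 = ((n - 1 : ℕ) : ℤ) by omega,
      diagVec_friezeOf a i (n - 1) (by omega)]
    exact companionProd_pred_mulVec_single_zero a i
      (companionProd_eq_smul_one_of_eq_at_one a h i)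
  refine isTameFrieze_of_boundary hn (satisfiesRecursion_friezeOf a)
    (fun j i hj => friezeOf_eq_zero a (by omega) i) (friezeOf_zero a)
    htop.1 fun j i hj => ?_
  by_cases hj' : j ≤ w + m + 1
  · exact htop.2 j i hj hj'
  · exact friezeOf_eq_zero a (by omega) i

end Construction

theorem exists_frieze_iff_friezeProd_general
    (K : Type) [Field K] (k w : ℕ) (hk : 2 ≤ k)
    (n : ℕ) (hn : n = w + k + 1) (a : Fin (k - 1) → ZMod n → K) :
    (∃ e : ℤ → ℤ → K, IsTameFrieze K k w e ∧ SatisfiesRecursion K k n e a) ↔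
      friezeProd K k n a
        = ((-1 : K) ^ (k - 1)) • (1 : Matrix (Fin k) (Fin k) K) := by
  obtain ⟨m, rfl⟩ : ∃ m, k = m + 1 := ⟨k - 1, by omega⟩
  have hn' : n = w + m + 2 := by omega
  rw [friezeProd_eq_companionProd, Nat.add_sub_cancel]
  constructor
  · rintro ⟨e, he, hrec⟩
    exact companionProd_eq_of_isTameFrieze hn' he hrec
  · intro h
    exact ⟨friezeOf a, isTameFrieze_friezeOf a hn' h, satisfiesRecursion_friezeOf a⟩

/-- there exists a tame `SL_k`-frieze pattern of width `w` whose entries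
satisfy the recursion with coefficients `(a_{s,i})` if and only if
`A_1 A_2 ⋯ A_n = (-1)^{k-1} I_k`. -/
theorem exists_frieze_iff_friezeProd
    (K : Type) [Field K] (k w : ℕ) (hk : 2 ≤ k) (hw : 1 ≤ w)
    (n : ℕ) (hn : n = w + k + 1) (a : Fin (k - 1) → ZMod n → K) :
    (∃ e : ℤ → ℤ → K, IsTameFrieze K k w e ∧ SatisfiesRecursion K k n e a) ↔
      friezeProd K k n a
        = ((-1 : K) ^ (k - 1)) • (1 : Matrix (Fin k) (Fin k) K) :=
  exists_frieze_iff_friezeProd_general K k w hk n hn a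

end FriezeCount
end
end

section
/- Let K be a field, k ≥ 2, n ≥ k, and suppose gcd(k, n) = 1. Then every (v_1, ..., v_n) ∈ C_k(n) admits a lift (V_1, ..., V_n) ∈ (K^k)^n with constant consecutive determinants. -/
open scoped Classical

noncomputable section

/-!
Rescaling a lift by `V_j ↦ λ_j V_j` multiplies the `i`-th consecutive determinant by
`λ_i λ_{i+1} ⋯ λ_{i+k-1}`. If `D_i` are the consecutive determinants of a fixed lift, we need
`λ_i ⋯ λ_{i+k-1} = c / D_i`; dividing two successive such equations, it suffices that
`λ_{i+k} / λ_i = D_i / D_{i+1}`. This is a recurrence along `i ↦ i + k`, which runs through all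
of `ℤ/n` because `gcd(k, n) = 1`, and it closes up because the product of the right-hand sides
over `ℤ/n` telescopes to `1`.
-/

theorem ZMod.val_natCast_sub_one {n i : ℕ} (h0 : 0 < i) (hi : i ≤ n) :
    ((i : ZMod n) - 1).val = i - 1 := by
  rw [← Nat.cast_pred h0, ZMod.val_natCast_of_lt (by omega)]

section CyclicProducts

variable {G : Type*} [CommGroup G] {n : ℕ} [NeZero n]

theorem ZMod.eq_apply_zero_of_apply_add_one {α : Type*} {f : ZMod n → α}
    (hf : ∀ j, f (j + 1) = f j) (j : ZMod n) : f j = f 0 := by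
  have hnat : ∀ m : ℕ, f m = f 0 := by
    intro m
    induction m with
    | zero => simp
    | succ m ih => rw [Nat.cast_succ, hf, ih]
  rw [← ZMod.natCast_zmod_val j, hnat]

theorem ZMod.prod_range_natCast (f : ZMod n → G) :
    ∏ m ∈ Finset.range n, f m = ∏ j, f j :=
  Finset.prod_nbij' (fun m => (m : ZMod n)) ZMod.val (by simp)
    (fun j _ => Finset.mem_range.mpr j.val_lt)
    (fun m hm => ZMod.val_natCast_of_lt (Finset.mem_range.mp hm))
    (fun j _ => ZMod.natCast_zmod_val j) (fun _ _ => rfl)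

theorem ZMod.exists_apply_add_one_eq_mul {g : ZMod n → G} (hg : ∏ j, g j = 1) :
    ∃ x : ZMod n → G, ∀ j, x (j + 1) = x j * g j := by
  refine ⟨fun j => ∏ m ∈ Finset.range j.val, g m, fun j => ?_⟩
  have hsucc : j + 1 = ((j.val + 1 : ℕ) : ZMod n) := by
    rw [Nat.cast_succ, ZMod.natCast_zmod_val]
  dsimp only
  rw [hsucc, ZMod.val_natCast]
  rcases (show j.val + 1 ≤ n from j.val_lt).lt_or_eq with hlt | heq
  · rw [Nat.mod_eq_of_lt hlt, Finset.prod_range_succ, ZMod.natCast_zmod_val]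
  · have hfull := Finset.prod_range_succ (fun m : ℕ => g m) j.val
    rw [heq, ZMod.natCast_zmod_val, ZMod.prod_range_natCast, hg] at hfull
    rw [heq, Nat.mod_self, Finset.prod_range_zero, hfull]

theorem ZMod.exists_apply_add_eq_mul (u : (ZMod n)ˣ) {g : ZMod n → G} (hg : ∏ j, g j = 1) :
    ∃ x : ZMod n → G, ∀ j, x (j + u) = x j * g j := by
  obtain ⟨y, hy⟩ := ZMod.exists_apply_add_one_eq_mul (g := fun m => g (m * (u : ZMod n))) <| by
    rw [← hg]
    exact Fintype.prod_equiv (Units.mulRight u) _ _ fun _ => rfl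
  refine ⟨fun j => y (j * ((u⁻¹ : (ZMod n)ˣ) : ZMod n)), fun j => ?_⟩
  dsimp only
  rw [add_mul, Units.mul_inv, hy, mul_assoc, Units.inv_mul, mul_one]

theorem ZMod.exists_prod_range_add_eq_mul {k : ℕ} (hk : k.Coprime n) (t : ZMod n → G) :
    ∃ (a : ZMod n → G) (c : G), ∀ j, ∏ r ∈ Finset.range k, a (j + r) = c * t j := by
  obtain ⟨a, ha⟩ := ZMod.exists_apply_add_eq_mul (ZMod.unitOfCoprime k hk)
    (g := fun j => t (j + 1) / t j) <| by
      rw [Finset.prod_div_distrib, div_eq_one]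
      exact Fintype.prod_equiv (Equiv.addRight 1) _ _ fun _ => rfl
  rw [ZMod.coe_unitOfCoprime] at ha
  set μ : ZMod n → G := fun j => ∏ r ∈ Finset.range k, a (j + r)
  have hμ : ∀ j, μ (j + 1) = μ j * (t (j + 1) / t j) := by
    intro j
    apply mul_left_cancel (a := a j)
    calc a j * μ (j + 1) = ∏ r ∈ Finset.range (k + 1), a (j + r) := by
          rw [Finset.prod_range_succ']
          simp only [μ, Nat.cast_add, Nat.cast_one, Nat.cast_zero, add_zero, add_assoc,
            add_comm (1 : ZMod n), mul_comm]
      _ = μ j * a (j + k) := by rw [Finset.prod_range_succ]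
      _ = a j * (μ j * (t (j + 1) / t j)) := by rw [ha, mul_left_comm]
  refine ⟨a, μ 0 / t 0, fun j => ?_⟩
  have hconst : μ j / t j = μ 0 / t 0 :=
    ZMod.eq_apply_zero_of_apply_add_one (f := fun j => μ j / t j)
      (fun j => by rw [hμ, mul_div_assoc', div_right_comm, mul_div_cancel_right]) j
  rw [← hconst, div_mul_cancel]

end CyclicProducts


namespace FriezeCount

def consecDet (K : Type) [Field K] (k n : ℕ) (V : ZMod n → Fin k → K) (i : ℕ) : K :=
  (Matrix.of fun r c : Fin k => signedExt K k n V (i + r) c).det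

section Lifts

variable {K : Type} [Field K] {k n : ℕ}

theorem signedExt_eq_smul (V : ZMod n → Fin k → K) (m : ℕ) :
    signedExt K k n V m = (if m ≤ n then 1 else (-1 : K) ^ (k - 1)) • V m := by
  unfold signedExt
  split_ifs <;> simp

theorem signedExt_smul (a : ZMod n → K) (V : ZMod n → Fin k → K) (m : ℕ) :
    signedExt K k n (fun j => a j • V j) m = a m • signedExt K k n V m := by
  simp only [signedExt_eq_smul, smul_comm (a _)]

theorem consecDet_eq_prod_mul_cycDet (V : ZMod n → Fin k → K) (i : ℕ) :
    consecDet K k n V i =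
      (∏ r ∈ Finset.range k, if i + r ≤ n then 1 else (-1 : K) ^ (k - 1)) *
        cycDet K k n V i := by
  have hrows : (Matrix.of fun r c : Fin k => signedExt K k n V (i + r) c) =
      Matrix.of fun r c : Fin k =>
        (if i + r ≤ n then 1 else (-1 : K) ^ (k - 1)) * V (i + r : ZMod n) c := by
    ext r c
    simp only [Matrix.of_apply, signedExt_eq_smul, Pi.smul_apply, smul_eq_mul, Nat.cast_add]
  rw [consecDet, hrows,
    ← Fin.prod_univ_eq_prod_range (fun r => if i + r ≤ n then 1 else (-1 : K) ^ (k - 1))]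
  exact Matrix.det_mul_column _ _

theorem consecDet_ne_zero {V : ZMod n → Fin k → K} {i : ℕ} (hV : cycDet K k n V i ≠ 0) :
    consecDet K k n V i ≠ 0 := by
  rw [consecDet_eq_prod_mul_cycDet]
  refine mul_ne_zero (Finset.prod_ne_zero_iff.mpr fun r _ => ?_) hV
  split_ifs <;> simp

theorem consecDet_smul (a : ZMod n → K) (V : ZMod n → Fin k → K) (i : ℕ) :
    consecDet K k n (fun j => a j • V j) i =
      (∏ r ∈ Finset.range k, a (i + r)) * consecDet K k n V i := by
  have hrows : (Matrix.of fun r c : Fin k => signedExt K k n (fun j => a j • V j) (i + r) c) =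
      Matrix.of fun r c : Fin k => a ↑(i + r : ℕ) * signedExt K k n V (i + r) c := by
    ext r c
    simp only [Matrix.of_apply, signedExt_smul, Pi.smul_apply, smul_eq_mul]
  rw [consecDet, consecDet, hrows, ← Fin.prod_univ_eq_prod_range (fun r => a (i + r))]
  push_cast
  exact Matrix.det_mul_column _ _

theorem cycDet_rep_ne_zero {v : ZMod n → Projectivization K (Fin k → K)}
    (hv : v ∈ Ccal K k n) (i : ZMod n) : cycDet K k n (fun j => (v j).rep) i ≠ 0 := by
  have hrows : LinearIndependent K (Matrix.of fun r c : Fin k => (v (i + r)).rep c) :=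
    Projectivization.independent_iff.mp (hv i)
  exact ((Matrix.isUnit_iff_isUnit_det _).mp
    (Matrix.linearIndependent_rows_iff_isUnit.mp hrows)).ne_zero

theorem isLift_units_smul_rep (v : ZMod n → Projectivization K (Fin k → K))
    (a : ZMod n → Kˣ) :
    IsLift K k n v fun j => (a j : K) • (v j).rep := fun j =>
  ⟨smul_ne_zero (a j).ne_zero (v j).rep_nonzero, by
    conv_rhs => rw [← (v j).mk_rep]
    exact (Projectivization.mk_eq_mk_iff K _ _ _ _).mpr ⟨a j, rfl⟩⟩

end Lifts

theorem exists_lift_constConsecDets_of_coprime_general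
    (K : Type) [Field K] (k n : ℕ)
    (hgcd : Nat.gcd k n = 1)
    (v : ZMod n → Projectivization K (Fin k → K)) (hv : v ∈ Ccal K k n) :
    ∃ V : ZMod n → Fin k → K, IsLift K k n v V ∧ HasConstConsecDets K k n V := by
  rcases eq_or_ne n 0 with rfl | hn
  · exact ⟨_, isLift_units_smul_rep v 1, by simp [HasConstConsecDets]⟩
  have : NeZero n := ⟨hn⟩
  set W : ZMod n → Fin k → K := fun j => (v j).rep
  have hW (i : ℕ) : consecDet K k n W i ≠ 0 := consecDet_ne_zero (cycDet_rep_ne_zero hv i)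
  -- the representative in `{1, ..., n}` of `j : ZMod n` is `(j - 1).val + 1`
  obtain ⟨a, c, ha⟩ := ZMod.exists_prod_range_add_eq_mul hgcd
    fun j : ZMod n => (Units.mk0 _ (hW ((j - 1).val + 1)))⁻¹
  have hconst (i : ℕ) (hi : i ∈ Finset.Icc 1 n) :
      consecDet K k n (fun j => (a j : K) • W j) i = c := by
    obtain ⟨hi₁, hin⟩ := Finset.mem_Icc.mp hi
    rw [consecDet_smul, ← Units.coe_prod, ha, ZMod.val_natCast_sub_one hi₁ hin,
      Nat.sub_add_cancel hi₁, Units.val_mul, Units.val_inv_eq_inv_val, Units.val_mk0,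
      inv_mul_cancel_right₀ (hW i)]
  exact ⟨_, isLift_units_smul_rep v a,
    fun i hi i' hi' => (hconst i hi).trans (hconst i' hi').symm⟩

/-- if `gcd(k, n) = 1`, every tuple in `C_k(n)` admits a lift with
constant consecutive determinants. -/
theorem exists_lift_constConsecDets_of_coprime
    (K : Type) [Field K] (k n : ℕ) (hk : 2 ≤ k) (hkn : k ≤ n)
    (hgcd : Nat.gcd k n = 1)
    (v : ZMod n → Projectivization K (Fin k → K)) (hv : v ∈ Ccal K k n) :
    ∃ V : ZMod n → Fin k → K, IsLift K k n v V ∧ HasConstConsecDets K k n V :=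
  exists_lift_constConsecDets_of_coprime_general K k n hgcd v hv

end FriezeCount
end
end

section
/- Let K be a field, k ≥ 2, n ≥ k, g = gcd(k, n), and let (V_1, ..., V_n) be a lift of (v_1, ..., v_n) ∈ C_k(n) with constant consecutive determinants. Then the set of all lifts of (v_1, ..., v_n) with constant consecutive determinants is exactly { (λ_1 V_1, ..., λ_g V_g, λ_1 V_{g+1}, ..., λ_g V_{2g}, ..., λ_1 V_{n-g+1}, ..., λ_g V_n) : λ_1, ..., λ_g ∈ K^* }, i.e. the lifts obtained by rescaling by an arbitrary g-periodic sequence of nonzero scalars. -/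
/-!
Two lifts of the same tuple differ by scalars `μ_i ∈ Kˣ`, and rescaling by `μ` multiplies
the `i`-th consecutive determinant by `Q_i = μ_i μ_{i+1} ⋯ μ_{i+k-1}`. Since consecutive
points are independent, the determinants of `V` are nonzero, so `μ • V` has constant
consecutive determinants iff `Q` is constant on `ℤ/n`. As `Q_{i+1} μ_i = Q_i μ_{i+k}`, this
says that `μ` is `k`-periodic, which by Bézout is the same as being `gcd(k, n)`-periodic.
-/

open scoped Classical

noncomputable section

namespace FriezeCount

variable (K : Type) [Field K]

section WindowProd

variable {R M : Type*} [AddCommMonoidWithOne R]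

def windowProd [CommMonoid M] (k : ℕ) (f : R → M) (x : R) : M :=
  ∏ r ∈ Finset.range k, f (x + r)

lemma windowProd_add_one_mul [CommMonoid M] (k : ℕ) (f : R → M) (x : R) :
    windowProd k f (x + 1) * f x = windowProd k f x * f (x + k) := by
  rw [windowProd, windowProd, ← Finset.prod_range_succ, Finset.prod_range_succ']
  simp only [Nat.cast_add, Nat.cast_one, Nat.cast_zero, add_zero, add_assoc, add_comm (1 : R)]

lemma windowProd_add_one_eq_iff [CancelCommMonoid M] (k : ℕ) (f : R → M) (x : R) :
    windowProd k f (x + 1) = windowProd k f x ↔ f (x + k) = f x := by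
  have h := windowProd_add_one_mul k f x
  constructor
  · intro hQ
    rw [hQ] at h
    exact (mul_left_cancel h).symm
  · intro hf
    rw [hf] at h
    exact mul_right_cancel h

end WindowProd

section Periodic

open Function

variable {α : Type*} {n : ℕ}

lemma periodic_natCast_gcd_of_periodic {f : ZMod n → α} {k : ℕ}
    (hf : Periodic f (k : ZMod n)) : Periodic f (Nat.gcd k n : ZMod n) := by
  have hgcd : ((Nat.gcd k n : ℕ) : ZMod n) = (Nat.gcdA k n : ZMod n) * k := by
    have h := congrArg (Int.cast : ℤ → ZMod n) (Nat.gcd_eq_gcd_ab k n)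
    push_cast at h
    rw [h, ZMod.natCast_self, zero_mul, add_zero, mul_comm]
  rw [hgcd]
  exact hf.int_mul _

variable [NeZero n]

lemma eq_of_periodic_one {f : ZMod n → α} (hf : Periodic f 1) (x y : ZMod n) : f x = f y := by
  have key : ∀ z : ZMod n, f z = f 0 := fun z => by
    simpa [ZMod.natCast_zmod_val] using hf.nat_mul_eq z.val
  rw [key x, key y]

lemma windowProd_const_iff_periodic {M : Type*} [CancelCommMonoid M] (k : ℕ) (f : ZMod n → M) :
    (∀ x y, windowProd k f x = windowProd k f y) ↔ Periodic f (k : ZMod n) :=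
  ⟨fun h x => (windowProd_add_one_eq_iff k f x).1 (h _ _),
    fun hf => eq_of_periodic_one fun x => (windowProd_add_one_eq_iff k f x).2 (hf x)⟩

lemma exists_comp_castHom_of_periodic {d : ℕ} (hd : d ∣ n) {f : ZMod n → α}
    (hf : Periodic f (d : ZMod n)) :
    ∃ g : ZMod d → α, ∀ i, f i = g (ZMod.castHom hd (ZMod d) i) := by
  have : NeZero d := ⟨by rintro rfl; exact NeZero.ne n (Nat.eq_zero_of_zero_dvd hd)⟩
  refine ⟨fun j => f (j.val : ZMod n), fun i => ?_⟩
  dsimp only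
  rw [ZMod.castHom_apply, ← ZMod.natCast_val, ZMod.val_natCast]
  conv_lhs => rw [← ZMod.natCast_zmod_val i, ← Nat.mod_add_div i.val d]
  rw [Nat.cast_add, Nat.cast_mul, mul_comm]
  exact hf.nat_mul _ _

lemma periodic_natCast_iff_exists_comp_castHom {f : ZMod n → α} {k : ℕ} :
    Periodic f (k : ZMod n) ↔
      ∃ g : ZMod (Nat.gcd k n) → α,
        ∀ i, f i = g (ZMod.castHom (Nat.gcd_dvd_right k n) (ZMod (Nat.gcd k n)) i) := by
  refine ⟨fun hf => exists_comp_castHom_of_periodic _ (periodic_natCast_gcd_of_periodic hf), ?_⟩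
  rintro ⟨g, hg⟩ x
  rw [hg, hg, map_add, map_natCast,
    (ZMod.natCast_eq_zero_iff k _).2 (Nat.gcd_dvd_left k n), add_zero]

lemma exists_mem_Icc_natCast_eq (x : ZMod n) : ∃ i ∈ Finset.Icc 1 n, (i : ZMod n) = x :=
  ⟨(x - 1).val + 1, Finset.mem_Icc.2 ⟨by omega, (x - 1).val_lt⟩, by
    rw [Nat.cast_add, ZMod.natCast_zmod_val, Nat.cast_one, sub_add_cancel]⟩

end Periodic

lemma independent_mk_iff_linearIndependent {F W ι : Type*} [DivisionRing F]
    [AddCommGroup W] [Module F W] {f : ι → W} (hf : ∀ i, f i ≠ 0) :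
    Projectivization.Independent (fun i => Projectivization.mk F (f i) (hf i)) ↔
      LinearIndependent F f := by
  rw [Projectivization.independent_iff_iSupIndep]
  simp only [Projectivization.submodule_mk]
  exact iSupIndep_iff_linearIndependent_of_ne_zero hf

section Lifts

variable {K} {k n : ℕ} {v : ZMod n → Projectivization K (Fin k → K)}
  {V W : ZMod n → Fin k → K}

lemma isLift_iff_exists_units_smul (hV : IsLift K k n v V) :
    IsLift K k n v W ↔ ∃ μ : ZMod n → Kˣ, W = fun i => (μ i : K) • V i := by
  constructor
  · intro hW
    choose μ hμ using fun i =>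
      (Projectivization.mk_eq_mk_iff K _ _ (hW i).1 (hV i).1).1 ((hW i).2.trans (hV i).2.symm)
    exact ⟨μ, funext fun i => (hμ i).symm⟩
  · rintro ⟨μ, rfl⟩ i
    have hne : (μ i : K) • V i ≠ 0 := smul_ne_zero (μ i).ne_zero (hV i).1
    refine ⟨hne, ?_⟩
    rw [← (hV i).2]
    exact (Projectivization.mk_eq_mk_iff K _ _ hne (hV i).1).2 ⟨μ i, rfl⟩

lemma linearIndependent_of_isLift (hv : v ∈ Ccal K k n) (hV : IsLift K k n v V) (x : ZMod n) :
    LinearIndependent K fun t : Fin k => V (x + (t : ℕ)) := by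
  have h := hv x
  rw [show (fun t : Fin k => v (x + (t : ℕ))) =
      fun t : Fin k => Projectivization.mk K (V (x + (t : ℕ))) (hV _).1
    from funext fun t => ((hV _).2).symm] at h
  exact (independent_mk_iff_linearIndependent _).1 h

lemma cycDet_ne_zero (hv : v ∈ Ccal K k n) (hV : IsLift K k n v V) (x : ZMod n) :
    cycDet K k n V x ≠ 0 :=
  ((Matrix.isUnit_iff_isUnit_det _).1
    (Matrix.linearIndependent_rows_iff_isUnit.1 (linearIndependent_of_isLift hv hV x))).ne_zero

variable (K k n) in
def signedWindowDet (V : ZMod n → Fin k → K) (i : ℕ) : K :=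
  (Matrix.of fun r c : Fin k => signedExt K k n V (i + r) c).det

lemma hasConstConsecDets_iff :
    HasConstConsecDets K k n V ↔ ∀ i ∈ Finset.Icc 1 n, ∀ i' ∈ Finset.Icc 1 n,
      signedWindowDet K k n V i = signedWindowDet K k n V i' :=
  Iff.rfl

lemma signedExt_eq_ite_smul (m : ℕ) :
    signedExt K k n V m = (if m ≤ n then 1 else (-1 : K) ^ (k - 1)) • V m := by
  unfold signedExt
  split_ifs <;> simp

lemma signedWindowDet_eq_prod_mul_cycDet (i : ℕ) :
    signedWindowDet K k n V i =
      (∏ r : Fin k, if i + r ≤ n then 1 else (-1 : K) ^ (k - 1)) * cycDet K k n V i := by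
  rw [signedWindowDet, cycDet, ← Matrix.det_mul_column]
  congr 1
  ext r c
  simp [signedExt_eq_ite_smul]

lemma signedWindowDet_ne_zero (hv : v ∈ Ccal K k n) (hV : IsLift K k n v V) (i : ℕ) :
    signedWindowDet K k n V i ≠ 0 := by
  rw [signedWindowDet_eq_prod_mul_cycDet]
  refine mul_ne_zero (Finset.prod_ne_zero_iff.2 fun r _ => ?_) (cycDet_ne_zero hv hV _)
  split_ifs <;> simp

lemma signedExt_units_smul (μ : ZMod n → Kˣ) (m : ℕ) :
    signedExt K k n (fun j => (μ j : K) • V j) m = (μ m : K) • signedExt K k n V m := by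
  unfold signedExt
  split_ifs
  · rfl
  · rw [smul_comm]

lemma signedWindowDet_units_smul (μ : ZMod n → Kˣ) (i : ℕ) :
    signedWindowDet K k n (fun j => (μ j : K) • V j) i =
      ((windowProd k μ (i : ZMod n) : Kˣ) : K) * signedWindowDet K k n V i := by
  rw [signedWindowDet, signedWindowDet, windowProd, Units.coe_prod,
    ← Fin.prod_univ_eq_prod_range (fun r => ((μ (i + r) : Kˣ) : K)), ← Matrix.det_mul_column]
  congr 1
  ext r c
  simp [signedExt_units_smul]

lemma hasConstConsecDets_units_smul_iff [NeZero n] (hv : v ∈ Ccal K k n)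
    (hV : IsLift K k n v V) (hVc : HasConstConsecDets K k n V) (μ : ZMod n → Kˣ) :
    HasConstConsecDets K k n (fun i => (μ i : K) • V i) ↔
      Function.Periodic μ (k : ZMod n) := by
  rw [← windowProd_const_iff_periodic, hasConstConsecDets_iff]
  rw [hasConstConsecDets_iff] at hVc
  simp only [signedWindowDet_units_smul]
  constructor
  · intro h x y
    obtain ⟨i, hi, rfl⟩ := exists_mem_Icc_natCast_eq x
    obtain ⟨i', hi', rfl⟩ := exists_mem_Icc_natCast_eq y
    have hQ := h i hi i' hi'
    rw [hVc i hi i' hi'] at hQ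
    exact Units.ext (mul_right_cancel₀ (signedWindowDet_ne_zero hv hV i') hQ)
  · intro h i hi i' hi'
    rw [h i i', hVc i hi i' hi']

end Lifts

/-- if `V` is a lift of `v ∈ C_k(n)` with constant consecutive
determinants, then the lifts of `v` with constant consecutive determinants are exactly
the rescalings of `V` by an arbitrary `gcd(k,n)`-periodic sequence of nonzero
scalars. -/
theorem lifts_constConsecDets_eq_periodic_rescalings
    (K : Type) [Field K] (k n : ℕ) (hk : 2 ≤ k) (hkn : k ≤ n)
    (v : ZMod n → Projectivization K (Fin k → K)) (hv : v ∈ Ccal K k n)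
    (V : ZMod n → Fin k → K) (hV : IsLift K k n v V)
    (hVc : HasConstConsecDets K k n V) :
    {W : ZMod n → Fin k → K | IsLift K k n v W ∧ HasConstConsecDets K k n W} =
      {W : ZMod n → Fin k → K | ∃ lam : ZMod (Nat.gcd k n) → Kˣ,
        ∀ i : ZMod n,
          W i = ((lam (ZMod.castHom (Nat.gcd_dvd_right k n)
            (ZMod (Nat.gcd k n)) i) : K)) • V i} := by
  have : NeZero n := ⟨by omega⟩
  ext W
  simp only [Set.mem_ofPred_eq, isLift_iff_exists_units_smul hV]
  constructor
  · rintro ⟨⟨μ, rfl⟩, hWc⟩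
    obtain ⟨lam, hlam⟩ := periodic_natCast_iff_exists_comp_castHom.1
      ((hasConstConsecDets_units_smul_iff hv hV hVc μ).1 hWc)
    exact ⟨lam, fun i => by simp only [hlam]⟩
  · rintro ⟨lam, hW⟩
    obtain rfl : W = _ := funext hW
    exact ⟨⟨_, rfl⟩, (hasConstConsecDets_units_smul_iff hv hV hVc _).2
      (periodic_natCast_iff_exists_comp_castHom.2 ⟨lam, fun _ => rfl⟩)⟩

end FriezeCount
end
end

section
/- Let K be a field, k ≥ 2, n ≥ k, g = gcd(k, n). Let v ∈ C_k(n) with lift (V_1, ..., V_n) and let (U_1, ..., U_r) be a decomposition of v. Then for every i ∈ {1, ..., n} there is exactly one j ∈ {1, ..., r} with V_i ∈ U_j; if φ : ℤ → {1, ..., r} denotes the map sending i (taken modulo n) to this j, then φ is g-periodic, i.e. φ(i) = φ(i + g) for all i. In particular, r ≤ g for every decomposition of v. -/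
/-!
If `φ (i + k) ≠ φ i`, then `V (i + k)` lies in the sum of the summands other than `U (φ i)`.
Expanding it in the basis `V i, …, V (i + k - 1)` and discarding the terms in `U (φ i)` (their
sum is zero by independence of the summands) expresses `V (i + k)` through `V (i + 1), …,
V (i + k - 1)`, contradicting the independence of the next window. So `φ` is `k`-periodic, and,
being defined on `ZMod n`, `gcd k n`-periodic by Bézout. Each summand must contain a vector of
the spanning window, so `φ` is onto and `r ≤ gcd k n`.
-/

open scoped Classical

noncomputable section

section DirectSumDecomposition

variable {R M ι α : Type*} [Ring R] [AddCommGroup M] [Module R M] {U : ι → Submodule R M}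

theorem iSupIndep.eq_of_mem_of_mem (hU : iSupIndep U) {x : M} (hx : x ≠ 0) {j j' : ι}
    (hj : x ∈ U j) (hj' : x ∈ U j') : j = j' := by
  by_contra hne
  exact hx (Submodule.disjoint_def.mp (hU.pairwiseDisjoint hne) x hj hj')

theorem iSupIndep.span_range_inf_iSup_ne_le (hU : iSupIndep U) {w : α → M} {φ : α → ι}
    (hw : ∀ a, w a ∈ U (φ a)) (j : ι) :
    Submodule.span R (Set.range w) ⊓ ⨆ (l) (_ : l ≠ j), U l ≤
      Submodule.span R (w '' {a | φ a ≠ j}) := by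
  set C := ⨆ (l) (_ : l ≠ j), U l
  set S := Submodule.span R (w '' {a | φ a ≠ j})
  have hrange : Set.range w = w '' {a | φ a ≠ j} ∪ w '' {a | φ a = j} := by
    rw [← Set.image_union, ← Set.image_univ]
    congr 1
    ext a
    simpa using em' _
  have hSC : S ≤ C := Submodule.span_le.mpr <| by
    rintro _ ⟨a, ha, rfl⟩
    exact le_iSup₂ (f := fun l (_ : l ≠ j) => U l) (φ a) ha (hw a)
  have hUj : Submodule.span R (w '' {a | φ a = j}) ≤ U j := Submodule.span_le.mpr <| by
    rintro _ ⟨a, ha, rfl⟩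
    exact ha ▸ hw a
  calc Submodule.span R (Set.range w) ⊓ C
      = (S ⊔ Submodule.span R (w '' {a | φ a = j})) ⊓ C := by
        rw [hrange, Submodule.span_union]
    _ ≤ S ⊔ Submodule.span R (w '' {a | φ a = j}) ⊓ C := sup_inf_le_assoc_of_le _ hSC
    _ ≤ S ⊔ U j ⊓ C := by gcongr
    _ = S := by rw [(hU j).eq_bot, sup_bot_eq]

theorem iSupIndep.surjective_of_span_eq_top (hU : iSupIndep U) (hbot : ∀ j, U j ≠ ⊥)
    {w : α → M} {φ : α → ι} (hw : ∀ a, w a ∈ U (φ a))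
    (hspan : Submodule.span R (Set.range w) = ⊤) : Function.Surjective φ := by
  intro j
  by_contra! hj
  refine hbot j ((hU j).eq_bot_of_le ?_)
  calc U j ≤ Submodule.span R (Set.range w) := hspan ▸ le_top
    _ ≤ ⨆ (l) (_ : l ≠ j), U l := Submodule.span_le.mpr <| by
      rintro _ ⟨a, rfl⟩
      exact le_iSup₂ (f := fun l (_ : l ≠ j) => U l) (φ a) (hj a) (hw a)

end DirectSumDecomposition

theorem Projectivization.independent_mk_iff {ι K V : Type*} [DivisionRing K] [AddCommGroup V]
    [Module K V] {f : ι → V} (hf : ∀ i, f i ≠ 0) :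
    Independent (fun i => mk K (f i) (hf i)) ↔ LinearIndependent K f := by
  refine ⟨fun h => ?_, Independent.mk f hf⟩
  choose a ha using fun i => exists_smul_eq_mk_rep K (f i) (hf i)
  rw [independent_iff] at h
  rw [← LinearIndependent.units_smul_iff f a]
  convert h using 1
  ext i
  exact ha i

namespace Function.Periodic

variable {α : Type*} {n : ℕ} {f : ZMod n → α}

theorem natCast_gcd {k : ℕ} (h : Periodic f (k : ZMod n)) :
    Periodic f (Nat.gcd k n : ZMod n) := by
  have hbezout : ((Nat.gcd k n : ℕ) : ZMod n) = Nat.gcdA k n • (k : ZMod n) := by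
    have := congrArg (Int.cast : ℤ → ZMod n) (Nat.gcd_eq_gcd_ab k n)
    push_cast [ZMod.natCast_self] at this
    rw [zsmul_eq_mul, mul_comm]
    simpa using this
  rw [hbezout]
  exact h.zsmul _

theorem exists_natCast_lt {g : ℕ} (h : Periodic f (g : ZMod n)) (hg : 0 < g) (i : ZMod n) :
    ∃ s < g, f s = f i := by
  obtain ⟨z, rfl⟩ := ZMod.intCast_surjective i
  have hper : Periodic (fun z : ℤ => f z) (g : ℤ) := fun z => by simpa using h z
  obtain ⟨y, ⟨hy0, hyg⟩, hfy⟩ := hper.exists_mem_Ico₀ (by exact_mod_cast hg) z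
  lift y to ℕ using hy0
  exact ⟨y, by exact_mod_cast hyg, by simpa using hfy.symm⟩

theorem card_le_of_surjective [Fintype α] {g : ℕ} (h : Periodic f (g : ZMod n)) (hg : 0 < g)
    (hf : Surjective f) : Fintype.card α ≤ g := by
  have hsurj : Surjective fun s : Fin g => f s := fun a => by
    obtain ⟨i, rfl⟩ := hf a
    obtain ⟨s, hs, hfs⟩ := h.exists_natCast_lt hg i
    exact ⟨⟨s, hs⟩, hfs⟩
  simpa using Fintype.card_le_of_surjective _ hsurj

end Function.Periodic

namespace FriezeCount

theorem periodic_of_linearIndependent_windows {K M ι : Type*} [Field K] [AddCommGroup M]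
    [Module K M] [FiniteDimensional K M] {k n : ℕ} (hdim : Module.finrank K M = k)
    {V : ZMod n → M} (hli : ∀ i, LinearIndependent K fun t : Fin k => V (i + (t : ℕ)))
    {U : ι → Submodule K M} (hU : iSupIndep U) {φ : ZMod n → ι}
    (hφ : ∀ i, V i ∈ U (φ i)) : Function.Periodic φ (k : ZMod n) := by
  intro i
  obtain _ | m := k
  · simp
  by_contra hne
  have hspan := (hli i).span_eq_top_of_card_eq_finrank' (by simp [hdim])
  have hmem : V (i + (m + 1 : ℕ)) ∈ Submodule.span K (Set.range fun t : Fin (m + 1) =>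
      V (i + (t : ℕ))) ⊓ ⨆ (l) (_ : l ≠ φ i), U l :=
    ⟨hspan ▸ trivial, le_iSup₂ (f := fun l (_ : l ≠ φ i) => U l) _ hne (hφ _)⟩
  -- `t = 0` is excluded because `V i ∈ U (φ i)`; the rest of window `i` lies in window `i + 1`
  have hsub : (fun t : Fin (m + 1) => V (i + (t : ℕ))) '' {t | φ (i + (t : ℕ)) ≠ φ i} ⊆
      (fun t : Fin (m + 1) => V (i + 1 + (t : ℕ))) '' {t | t ≠ Fin.last m} := by
    rintro _ ⟨t, ht, rfl⟩
    obtain ⟨t', rfl⟩ := Fin.eq_succ_of_ne_zero (show t ≠ 0 by rintro rfl; simp at ht)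
    refine ⟨t'.castSucc, Fin.castSucc_ne_last t', ?_⟩
    simp only [Fin.val_succ, Fin.val_castSucc]
    push_cast
    ring_nf
  have hlast : V (i + 1 + (Fin.last m : ℕ)) = V (i + (m + 1 : ℕ)) := by
    simp only [Fin.val_last]
    push_cast
    ring_nf
  refine (hli (i + 1)).notMem_span_image (s := {t | t ≠ Fin.last m}) (x := Fin.last m)
    (by simp) ?_
  rw [hlast]
  exact Submodule.span_mono hsub (hU.span_range_inf_iSup_ne_le (fun t => hφ _) (φ i) hmem)

theorem IsLift.linearIndependent_window {K : Type} [Field K] {k n : ℕ}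
    {v : ZMod n → Projectivization K (Fin k → K)} {V : ZMod n → Fin k → K}
    (hV : IsLift K k n v V) (hv : v ∈ Ccal K k n) (i : ZMod n) :
    LinearIndependent K fun t : Fin k => V (i + (t : ℕ)) := by
  choose hV0 hVv using hV
  obtain rfl : v = fun j => Projectivization.mk K (V j) (hV0 j) := funext fun j => (hVv j).symm
  exact (Projectivization.independent_mk_iff fun t : Fin k => hV0 _).mp (hv i)

theorem decomposition_map_periodic_general
    (K : Type) [Field K] (k n : ℕ) (hk : 2 ≤ k)
    (v : ZMod n → Projectivization K (Fin k → K)) (hv : v ∈ Ccal K k n)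
    (V : ZMod n → Fin k → K) (hV : IsLift K k n v V)
    (r : ℕ) (U : Fin r → Submodule K (Fin k → K))
    (hU : IsDecompOfLift K k n V U) :
    (∀ i : ZMod n, ∃! j : Fin r, V i ∈ U j) ∧
    (∀ φ : ZMod n → Fin r, (∀ i, V i ∈ U (φ i)) →
      ∀ i : ZMod n, φ (i + (Nat.gcd k n : ZMod n)) = φ i) ∧
    r ≤ Nat.gcd k n := by
  obtain ⟨hbot, hindep, -, hmem⟩ := hU
  have hli := hV.linearIndependent_window hv
  have hper : ∀ φ : ZMod n → Fin r, (∀ i, V i ∈ U (φ i)) →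
      Function.Periodic φ (Nat.gcd k n : ZMod n) := fun φ hφ =>
    (periodic_of_linearIndependent_windows (by simp) hli hindep hφ).natCast_gcd
  choose φ hφ using hmem
  refine ⟨fun i => ⟨φ i, hφ i, fun j hj => hindep.eq_of_mem_of_mem (hV i).1 hj (hφ i)⟩,
    hper, ?_⟩
  have hsurj : Function.Surjective φ := Function.Surjective.of_comp <|
    hindep.surjective_of_span_eq_top hbot (fun t : Fin k => hφ (0 + (t : ℕ)))
      ((hli 0).span_eq_top_of_card_eq_finrank' (by simp))
  simpa using (hper φ hφ).card_le_of_surjective (Nat.gcd_pos_of_pos_left n (by omega))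
    hsurj

/-- for a decomposition `(U_1, ..., U_r)` of `v ∈ C_k(n)` with lift `V`,
every `V_i` lies in exactly one `U_j`; the induced map `φ` is `gcd(k,n)`-periodic;
and `r ≤ gcd(k, n)`. -/
theorem decomposition_map_periodic
    (K : Type) [Field K] (k n : ℕ) (hk : 2 ≤ k) (hkn : k ≤ n)
    (v : ZMod n → Projectivization K (Fin k → K)) (hv : v ∈ Ccal K k n)
    (V : ZMod n → Fin k → K) (hV : IsLift K k n v V)
    (r : ℕ) (U : Fin r → Submodule K (Fin k → K))
    (hU : IsDecompOfLift K k n V U) :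
    (∀ i : ZMod n, ∃! j : Fin r, V i ∈ U j) ∧
    (∀ φ : ZMod n → Fin r, (∀ i, V i ∈ U (φ i)) →
      ∀ i : ZMod n, φ (i + (Nat.gcd k n : ZMod n)) = φ i) ∧
    r ≤ Nat.gcd k n :=
  decomposition_map_periodic_general K k n hk v hv V hV r U hU

end FriezeCount
end
end

section
/- Let K be a field, k ≥ 2, n ≥ k, and let v ∈ C_k(n). Let (U_1, ..., U_r) be a maximal decomposition of v and let (W_1, ..., W_s) be any decomposition of v. Then for every j ∈ {1, ..., r} there is an l ∈ {1, ..., s} with U_j ⊆ W_l. In particular, any two maximal decompositions of v consist of the same subspaces, i.e. the maximal decomposition is unique up to ordering. -/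
open scoped Classical

noncomputable section

/-! Any `k` consecutive points of `v ∈ C_k(n)` span `K^k`, so every member of a decomposition
is spanned by the points `V_i` it contains. Given a member `U_j` of a maximal decomposition and
any decomposition `(W_l)`, let `T_l` be the span of the points lying in `U_j ∩ W_l`. Then
`U_j = ⨆ T_l` with `T_l ≤ W_l` independent, so if `U_j` lay in no `W_l`, splitting off one
nonzero `T_l` from the others would refine `U_j`, against maximality. For uniqueness,
`U_j ≤ U'_l ≤ U_m` forces `j = m` by independence, hence `U_j = U'_l`. -/

section Lattice

variable {α ι : Type*} [CompleteLattice α]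

theorem iSupIndep.eq_of_le {t : ι → α} (ht : iSupIndep t) {i j : ι} (hi : t i ≠ ⊥)
    (hij : t i ≤ t j) : i = j := by
  by_contra h
  exact hi ((ht.pairwiseDisjoint h).eq_bot_of_le hij)

theorem iSupIndep.exists_disjoint_split {T W : ι → α} (hW : iSupIndep W) (hTW : T ≤ W)
    (hne : ⨆ i, T i ≠ ⊥) (hnle : ∀ i, ¬ ⨆ j, T j ≤ W i) :
    ∃ i, T i ≠ ⊥ ∧ (⨆ (j) (_ : j ≠ i), T j) ≠ ⊥ ∧
      Disjoint (T i) (⨆ (j) (_ : j ≠ i), T j) := by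
  obtain ⟨i, hi⟩ : ∃ i, T i ≠ ⊥ := by
    by_contra! h
    exact hne (iSup_eq_bot.mpr h)
  refine ⟨i, hi, fun hrest => hnle i ?_, (hW i).mono (hTW i) (iSup₂_mono fun j _ => hTW j)⟩
  rw [iSup_split_single T i, hrest, sup_bot_eq]
  exact hTW i

end Lattice

namespace Submodule

variable {R M κ : Type*} [Ring R] [AddCommGroup M] [Module R M]

theorem span_eq_iSup_span_inter {A : Set M} {D : κ → Submodule R M}
    (hA : A ⊆ ⋃ j, (D j : Set M)) : span R A = ⨆ j, span R (A ∩ D j) := by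
  rw [← span_iUnion, ← Set.inter_iUnion, Set.inter_eq_left.mpr hA]

theorem span_range_inter_eq {ι : Type*} {V : ι → M} (hV : span R (Set.range V) = ⊤)
    {D : κ → Submodule R M} (hD : iSupIndep D) (hmem : ∀ i, ∃ j, V i ∈ D j) (j : κ) :
    span R (Set.range V ∩ D j) = D j := by
  have hcover : Set.range V ⊆ ⋃ j, (D j : Set M) :=
    Set.range_subset_iff.mpr fun i => Set.mem_iUnion.mpr (hmem i)
  have hle : (fun l => span R (Set.range V ∩ D l)) ≤ D := fun l =>
    span_le.mpr Set.inter_subset_right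
  have htop : ⨆ l, span R (Set.range V ∩ D l) = ⊤ := by
    rw [← span_eq_iSup_span_inter hcover, hV]
  exact congrFun ((hD.le_iff_eq_of_iSup_eq_top htop).mp hle) j

end Submodule

namespace FriezeCount

open Submodule

variable {K : Type} [Field K] {k n : ℕ} {v : ZMod n → Projectivization K (Fin k → K)}

theorem isLift_rep (v : ZMod n → Projectivization K (Fin k → K)) :
    IsLift K k n v fun i => (v i).rep :=
  fun i => ⟨(v i).rep_nonzero, (v i).mk_rep⟩

theorem IsLift.mem_iff {V V' : ZMod n → Fin k → K} (hV : IsLift K k n v V)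
    (hV' : IsLift K k n v V') (M : Submodule K (Fin k → K)) (i : ZMod n) :
    V' i ∈ M ↔ V i ∈ M := by
  obtain ⟨h, e⟩ := hV i
  obtain ⟨h', e'⟩ := hV' i
  obtain ⟨a, ha⟩ := (Projectivization.mk_eq_mk_iff K _ _ h' h).mp (e'.trans e.symm)
  rw [← ha]
  exact M.smul_mem_iff a.isUnit.ne_zero

theorem span_range_rep_eq_top (hv : v ∈ Ccal K k n) :
    span K (Set.range fun i => (v i).rep) = ⊤ :=
  eq_top_mono
    (span_mono (Set.range_comp_subset_range (fun t : Fin k => 0 + ((t : ℕ) : ZMod n)) _))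
    ((Projectivization.independent_iff.mp (hv 0)).span_eq_top_of_card_eq_finrank' (by simp))

theorem IsMaxDecompOf.not_forall_mem_or_mem {r : ℕ} {U : Fin r → Submodule K (Fin k → K)}
    (hU : IsMaxDecompOf K k n v U) {V : ZMod n → Fin k → K} (hV : IsLift K k n v V) {j : Fin r}
    {W₁ W₂ : Submodule K (Fin k → K)} (h₁ : W₁ ≠ ⊥) (h₂ : W₂ ≠ ⊥) (hdisj : Disjoint W₁ W₂)
    (hsup : W₁ ⊔ W₂ = U j) : ¬ ∀ i, V i ∈ U j → V i ∈ W₁ ∨ V i ∈ W₂ := by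
  intro hsplit
  refine hU.2 j W₁ W₂ h₁ h₂ hdisj hsup fun V' hV' i => ?_
  simp only [hV.mem_iff hV']
  obtain ⟨l, hl⟩ := (hU.1 V hV).2.2.2 i
  by_cases hlj : l = j
  · subst hlj
    exact Or.inr (hsplit i hl)
  · exact Or.inl ⟨l, hlj, hl⟩

theorem IsMaxDecompOf.exists_le (hv : v ∈ Ccal K k n) {r s : ℕ}
    {U : Fin r → Submodule K (Fin k → K)} {W : Fin s → Submodule K (Fin k → K)}
    (hU : IsMaxDecompOf K k n v U) (hW : IsDecompOf K k n v W) (j : Fin r) :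
    ∃ l, U j ≤ W l := by
  set V : ZMod n → Fin k → K := fun i => (v i).rep
  obtain ⟨hUne, hUind, -, hUmem⟩ := hU.1 V (isLift_rep v)
  obtain ⟨-, hWind, -, hWmem⟩ := hW V (isLift_rep v)
  set T : Fin s → Submodule K (Fin k → K) := fun l => span K (Set.range V ∩ U j ∩ W l)
  have hT : ⨆ l, T l = U j := by
    have hcover : Set.range V ∩ U j ⊆ ⋃ l, (W l : Set _) := Set.inter_subset_left.trans
      (Set.range_subset_iff.mpr fun i => Set.mem_iUnion.mpr (hWmem i))
    rw [← span_eq_iSup_span_inter hcover,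
      span_range_inter_eq (span_range_rep_eq_top hv) hUind hUmem]
  by_contra! hnle
  have hne : ⨆ l, T l ≠ ⊥ := hT ▸ hUne j
  obtain ⟨l, hl, hrest, hdisj⟩ := hWind.exists_disjoint_split
    (fun l => span_le.mpr Set.inter_subset_right) hne (by rwa [hT])
  have hsup : T l ⊔ ⨆ (m) (_ : m ≠ l), T m = U j := by rw [← iSup_split_single, hT]
  refine hU.not_forall_mem_or_mem (isLift_rep v) hl hrest hdisj hsup fun i hi => ?_
  obtain ⟨m, hm⟩ := hWmem i
  have hiT : V i ∈ T m := subset_span ⟨⟨⟨i, rfl⟩, hi⟩, hm⟩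
  by_cases hml : m = l
  · subst hml
    exact Or.inl hiT
  · exact Or.inr (le_iSup₂ (f := fun m (_ : m ≠ l) => T m) m hml hiT)

theorem IsMaxDecompOf.range_subset (hv : v ∈ Ccal K k n) {r₁ r₂ : ℕ}
    {U₁ : Fin r₁ → Submodule K (Fin k → K)} {U₂ : Fin r₂ → Submodule K (Fin k → K)}
    (h₁ : IsMaxDecompOf K k n v U₁) (h₂ : IsMaxDecompOf K k n v U₂) :
    Set.range U₁ ⊆ Set.range U₂ := by
  rintro _ ⟨j, rfl⟩
  obtain ⟨l, hjl⟩ := h₁.exists_le hv h₂.1 j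
  obtain ⟨m, hlm⟩ := h₂.exists_le hv h₁.1 l
  obtain ⟨hne, hind, -⟩ := h₁.1 _ (isLift_rep v)
  obtain rfl := hind.eq_of_le (hne j) (hjl.trans hlm)
  exact ⟨l, hlm.antisymm hjl⟩

theorem maximal_decomposition_le_and_unique_general
    (K : Type) [Field K] (k n : ℕ)
    (v : ZMod n → Projectivization K (Fin k → K)) (hv : v ∈ Ccal K k n)
    (r s : ℕ) (U : Fin r → Submodule K (Fin k → K))
    (W : Fin s → Submodule K (Fin k → K))
    (hU : IsMaxDecompOf K k n v U) (hW : IsDecompOf K k n v W) :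
    (∀ j : Fin r, ∃ l : Fin s, U j ≤ W l) ∧
    (∀ (r' : ℕ) (U' : Fin r' → Submodule K (Fin k → K)),
      IsMaxDecompOf K k n v U' → Set.range U = Set.range U') :=
  ⟨hU.exists_le hv hW, fun _ _ hU' => (hU.range_subset hv hU').antisymm (hU'.range_subset hv hU)⟩

/-- each member of a maximal decomposition of `v ∈ C_k(n)` is contained
in some member of any decomposition of `v`; in particular the maximal decomposition
is unique up to ordering. -/
theorem maximal_decomposition_le_and_unique
    (K : Type) [Field K] (k n : ℕ) (hk : 2 ≤ k) (hkn : k ≤ n)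
    (v : ZMod n → Projectivization K (Fin k → K)) (hv : v ∈ Ccal K k n)
    (r s : ℕ) (U : Fin r → Submodule K (Fin k → K))
    (W : Fin s → Submodule K (Fin k → K))
    (hU : IsMaxDecompOf K k n v U) (hW : IsDecompOf K k n v W) :
    (∀ j : Fin r, ∃ l : Fin s, U j ≤ W l) ∧
    (∀ (r' : ℕ) (U' : Fin r' → Submodule K (Fin k → K)),
      IsMaxDecompOf K k n v U' → Set.range U = Set.range U') :=
  maximal_decomposition_le_and_unique_general K k n v hv r s U W hU hW

end FriezeCount
end
end

section
/- Let K = F_q be a finite field with q elements and let n ≥ 4. Then c_3(n) = (q-1)^2 c_3(n-1) + 2q(q-1) c_3^{+-}(n-1) + q^2 c_3^{--}(n-1). -/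
open scoped Classical

noncomputable section

/-
Delete the last point of a tuple in `C_3(n)`. What remains is a tuple
`(v_1, …, v_{n-1})` with `v_{n-1} ≠ v_1` whose triples not passing through the deleted point
are independent, and the deleted point `p` is exactly a point off the three lines
`v_{n-2}v_{n-1}`, `v_{n-1}v_1` and `v_1v_2`. In `ℙ²(𝔽_q)` the number of such `p` is
`q² + q + 1` minus the size of the union of these lines, and that depends only on which of the
two wrap-around triples `(v_{n-2}, v_{n-1}, v_1)` and `(v_{n-1}, v_1, v_2)` are independent,
i.e. on the class `C_3^{s₁s₂}(n-1)` of the shortened tuple: it is `(q-1)²`, `q(q-1)`, `q(q-1)`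
or `q²`. The class `++` is `C_3(n-1)`, and reversing a tuple exchanges the classes `+-` and `-+`.
-/

open scoped LinearAlgebra.Projectivization

namespace Projectivization

variable {K V : Type*} [Field K] [AddCommGroup V] [Module K V]

theorem Independent.injective {ι : Type*} {f : ι → ℙ K V} (h : Independent f) :
    Function.Injective f := by
  rw [independent_iff] at h
  exact h.injective.of_comp

theorem independent_comp_equiv_iff {ι ι' : Type*} (f : ι → ℙ K V) (e : ι' ≃ ι) :
    Independent (f ∘ e) ↔ Independent f := by
  simp only [independent_iff, ← Function.comp_assoc, linearIndependent_equiv]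

theorem independent_rotate_iff {a b c : ℙ K V} :
    Independent ![a, b, c] ↔ Independent ![b, c, a] := by
  rw [← independent_comp_equiv_iff ![a, b, c] (finRotate 3)]
  exact Iff.of_eq (congrArg _ (funext fun i => by fin_cases i <;> rfl))

theorem independent_reverse_iff {a b c : ℙ K V} :
    Independent ![a, b, c] ↔ Independent ![c, b, a] := by
  rw [← independent_comp_equiv_iff ![a, b, c] (Equiv.swap 0 2)]
  exact Iff.of_eq (congrArg _ (funext fun i => by fin_cases i <;> rfl))

theorem linearIndependent_rep_pair {x y : ℙ K V} (hxy : x ≠ y) :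
    LinearIndependent K ![x.rep, y.rep] := by
  have h := (independent_pair_iff_ne x y).2 hxy
  rw [independent_iff] at h
  convert h using 1
  exact funext fun i => by fin_cases i <;> rfl

theorem span_range_rep_pair (x y : ℙ K V) :
    Submodule.span K (Set.range ![x.rep, y.rep]) = x.submodule ⊔ y.submodule := by
  rw [Matrix.range_cons, Matrix.range_cons, Matrix.range_empty, Set.union_empty,
    Submodule.span_union, submodule_eq, submodule_eq]

def line (x y : ℙ K V) : Submodule K V := x.submodule ⊔ y.submodule

theorem line_comm (x y : ℙ K V) : line x y = line y x := sup_comm _ _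

theorem left_mem_line (x y : ℙ K V) : x ∈ (line x y).projectivization :=
  (Submodule.mem_projectivization_iff_submodule_le _ _).2 le_sup_left

theorem right_mem_line (x y : ℙ K V) : y ∈ (line x y).projectivization :=
  (Submodule.mem_projectivization_iff_submodule_le _ _).2 le_sup_right

theorem finrank_line {x y : ℙ K V} (hxy : x ≠ y) : Module.finrank K (line x y) = 2 := by
  rw [line, ← span_range_rep_pair, finrank_span_eq_card (linearIndependent_rep_pair hxy),
    Fintype.card_fin]

theorem line_eq_of_mem {x y z : ℙ K V} (hxy : x ≠ y) (hyz : y ≠ z)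
    (hz : z ∈ (line x y).projectivization) : line y z = line x y :=
  line_unique hyz _ _ (finrank_line hyz) (finrank_line hxy) (left_mem_line y z)
    (right_mem_line y z) (right_mem_line x y) hz

theorem independent_triple_iff {x y p : ℙ K V} (hxy : x ≠ y) :
    Independent ![x, y, p] ↔ p ∉ (line x y).projectivization := by
  have hrep : Projectivization.rep ∘ ![x, y, p] = Fin.snoc ![x.rep, y.rep] p.rep :=
    funext fun i => by fin_cases i <;> rfl
  rw [independent_iff, hrep, linearIndependent_finSnoc, span_range_rep_pair,
    Submodule.mem_projectivization_iff_submodule_le, p.submodule_eq,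
    Submodule.span_singleton_le_iff_mem]
  exact and_iff_right (linearIndependent_rep_pair hxy)

theorem coe_projectivization_inf (W₁ W₂ : Submodule K V) :
    ((W₁ ⊓ W₂).projectivization : Set (ℙ K V)) =
      (W₁.projectivization : Set (ℙ K V)) ∩ W₂.projectivization := by
  ext p
  simp only [Set.mem_inter_iff, SetLike.mem_coe, Submodule.mem_projectivization_iff_submodule_le,
    le_inf_iff]

theorem ncard_projectivization (W : Submodule K V) :
    (W.projectivization : Set (ℙ K V)).ncard = Nat.card (ℙ K W) := by
  let f : ℙ K W → ℙ K V := map W.subtype Subtype.val_injective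
  have hrange : Set.range f = W.projectivization := by
    ext p
    induction p using ind with | h v hv =>
    constructor
    · rintro ⟨q, hq⟩
      induction q using ind with | h w hw =>
      rw [SetLike.mem_coe, ← hq]
      exact (Submodule.mk_mem_projectivization_iff _ _).2 w.2
    · intro h
      exact ⟨mk K ⟨v, (Submodule.mk_mem_projectivization_iff _ hv).1 h⟩
        (by simpa using hv), rfl⟩
  rw [← hrange]
  exact Set.ncard_range_of_injective (map_injective _ _)

theorem finrank_inf_of_finrank_eq_three (hV : Module.finrank K V = 3) {W₁ W₂ : Submodule K V}
    (h₁ : Module.finrank K W₁ = 2) (h₂ : Module.finrank K W₂ = 2) (hne : W₁ ≠ W₂) :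
    Module.finrank K ↥(W₁ ⊓ W₂) = 1 := by
  have : FiniteDimensional K V := Module.finite_of_finrank_eq_succ hV
  have hsup : 2 < Module.finrank K ↥(W₁ ⊔ W₂) := by
    refine h₁ ▸ Submodule.finrank_lt_finrank_of_lt (lt_of_le_of_ne le_sup_left fun h => hne ?_)
    exact Submodule.eq_of_le_of_finrank_eq (h ▸ le_sup_right) (h₂.trans h₁.symm) |>.symm
  have hle := hV ▸ Submodule.finrank_le (W₁ ⊔ W₂)
  have := Submodule.finrank_sup_add_finrank_inf_eq W₁ W₂
  omega

def admissible (x y z u : ℙ K V) : Set (ℙ K V) :=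
  {p | Independent ![x, y, p] ∧ Independent ![y, p, z] ∧ Independent ![p, z, u]}

theorem admissible_eq_compl {x y z u : ℙ K V} (hxy : x ≠ y) (hyz : y ≠ z) (hzu : z ≠ u) :
    admissible x y z u = ((line x y).projectivization ∪ (line y z).projectivization ∪
      (line z u).projectivization : Set (ℙ K V))ᶜ := by
  ext p
  rw [admissible, Set.mem_ofPred_eq, independent_triple_iff hxy, independent_rotate_iff,
    independent_rotate_iff, independent_triple_iff hyz.symm, line_comm z y,
    independent_rotate_iff, independent_triple_iff hzu]
  simp only [Set.mem_compl_iff, Set.mem_union, SetLike.mem_coe]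
  tauto

def admissibleCount (q : ℕ) : Bool → Bool → ℕ
  | true, true => (q - 1) ^ 2
  | true, false => q * (q - 1)
  | false, true => q * (q - 1)
  | false, false => q ^ 2

section Finite

variable [Finite K]

theorem ncard_projectivization_of_finrank_one {W : Submodule K V}
    (hW : Module.finrank K W = 1) : (W.projectivization : Set (ℙ K V)).ncard = 1 := by
  simp [ncard_projectivization, card_of_finrank K W hW]

theorem ncard_projectivization_of_finrank_two {W : Submodule K V}
    (hW : Module.finrank K W = 2) :
    (W.projectivization : Set (ℙ K V)).ncard = Nat.card K + 1 := by
  rw [ncard_projectivization, card_of_finrank_two K W hW]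

variable (hV : Module.finrank K V = 3)
include hV

theorem card_of_finrank_three : Nat.card (ℙ K V) = Nat.card K ^ 2 + Nat.card K + 1 := by
  rw [card_of_finrank K V hV]
  simp [Finset.sum_range_succ]
  ring

theorem ncard_inter_of_ne {W₁ W₂ : Submodule K V} (h₁ : Module.finrank K W₁ = 2)
    (h₂ : Module.finrank K W₂ = 2) (hne : W₁ ≠ W₂) :
    ((W₁.projectivization : Set (ℙ K V)) ∩ W₂.projectivization).ncard = 1 := by
  rw [← coe_projectivization_inf]
  exact ncard_projectivization_of_finrank_one (finrank_inf_of_finrank_eq_three hV h₁ h₂ hne)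

variable [Finite V]

theorem ncard_union_of_ne {W₁ W₂ : Submodule K V} (h₁ : Module.finrank K W₁ = 2)
    (h₂ : Module.finrank K W₂ = 2) (hne : W₁ ≠ W₂) :
    ((W₁.projectivization : Set (ℙ K V)) ∪ W₂.projectivization).ncard = 2 * Nat.card K + 1 := by
  have := Set.ncard_union_add_ncard_inter (W₁.projectivization : Set (ℙ K V)) W₂.projectivization
  rw [ncard_inter_of_ne hV h₁ h₂ hne, ncard_projectivization_of_finrank_two h₁,
    ncard_projectivization_of_finrank_two h₂] at this
  omega

theorem ncard_union_three_of_ne {W₁ W₂ W₃ : Submodule K V} (h₁ : Module.finrank K W₁ = 2)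
    (h₂ : Module.finrank K W₂ = 2) (h₃ : Module.finrank K W₃ = 2) (h₁₂ : W₁ ≠ W₂)
    (h₁₃ : W₁ ≠ W₃) (h₂₃ : W₂ ≠ W₃)
    (hempty : (W₁.projectivization : Set (ℙ K V)) ∩ W₂.projectivization ∩
      W₃.projectivization = ∅) :
    ((W₁.projectivization : Set (ℙ K V)) ∪ W₂.projectivization ∪ W₃.projectivization).ncard =
      3 * Nat.card K := by
  set L₁ : Set (ℙ K V) := SetLike.coe W₁.projectivization
  set L₂ : Set (ℙ K V) := SetLike.coe W₂.projectivization
  set L₃ : Set (ℙ K V) := SetLike.coe W₃.projectivization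
  have hdisj : Disjoint (L₁ ∩ L₃) (L₂ ∩ L₃) := by
    rw [Set.disjoint_iff_inter_eq_empty, ← hempty]
    ext; simp only [Set.mem_inter_iff]; tauto
  have hinter : ((L₁ ∪ L₂) ∩ L₃).ncard = 2 := by
    rw [Set.union_inter_distrib_right, Set.ncard_union_eq hdisj, ncard_inter_of_ne hV h₁ h₃ h₁₃,
      ncard_inter_of_ne hV h₂ h₃ h₂₃]
  have := Set.ncard_union_add_ncard_inter (L₁ ∪ L₂) L₃
  rw [hinter, ncard_union_of_ne hV h₁ h₂ h₁₂, ncard_projectivization_of_finrank_two h₃] at this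
  omega

theorem ncard_union_lines_of_independent {x y z u : ℙ K V} (h₁ : Independent ![x, y, z])
    (h₂ : Independent ![y, z, u]) :
    ((line x y).projectivization ∪ (line y z).projectivization ∪ (line z u).projectivization :
      Set (ℙ K V)).ncard = 3 * Nat.card K := by
  have hxy : x ≠ y := h₁.injective.ne (by decide : (0 : Fin 3) ≠ 1)
  have hyz : y ≠ z := h₂.injective.ne (by decide : (0 : Fin 3) ≠ 1)
  have hzu : z ≠ u := h₂.injective.ne (by decide : (1 : Fin 3) ≠ 2)
  have hz := (independent_triple_iff hxy).1 h₁
  have hu := (independent_triple_iff hyz).1 h₂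
  have hy := (independent_triple_iff hzu).1 (independent_rotate_iff.1 h₂)
  have h₁₂ : line x y ≠ line y z := fun h => hz (h ▸ right_mem_line y z)
  have h₂₃ : line y z ≠ line z u := fun h => hu (h ▸ right_mem_line z u)
  have h₁₃ : line x y ≠ line z u := fun h => hy (h ▸ right_mem_line x y)
  refine ncard_union_three_of_ne hV (finrank_line hxy) (finrank_line hyz) (finrank_line hzu)
    h₁₂ h₁₃ h₂₃ (Set.eq_empty_of_forall_notMem fun p ⟨hp₁₂, hp₃⟩ => hy ?_)
  -- two distinct lines through `y` meet only in `y`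
  obtain ⟨a, ha⟩ := Set.ncard_eq_one.1
    (ncard_inter_of_ne hV (finrank_line hxy) (finrank_line hyz) h₁₂)
  have hy₁₂ : y ∈ ((line x y).projectivization ∩ (line y z).projectivization : Set (ℙ K V)) :=
    ⟨right_mem_line x y, left_mem_line y z⟩
  rw [ha, Set.mem_singleton_iff] at hy₁₂ hp₁₂
  exact (hy₁₂.trans hp₁₂.symm) ▸ hp₃

theorem ncard_admissible {x y z u : ℙ K V} (hxy : x ≠ y) (hyz : y ≠ z) (hzu : z ≠ u)
    {s₁ s₂ : Bool} (h₁ : Independent ![x, y, z] ↔ s₁ = true)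
    (h₂ : Independent ![y, z, u] ↔ s₂ = true) :
    (admissible x y z u).ncard = admissibleCount (Nat.card K) s₁ s₂ := by
  have hq : 1 ≤ Nat.card K := Finite.one_lt_card.le
  have htotal := Set.ncard_add_ncard_compl ((line x y).projectivization ∪
    (line y z).projectivization ∪ (line z u).projectivization : Set (ℙ K V))
  rw [← admissible_eq_compl hxy hyz hzu, card_of_finrank_three hV] at htotal
  rw [independent_triple_iff hxy] at h₁
  rw [independent_triple_iff hyz] at h₂
  cases s₁ <;> cases s₂ <;>
    simp only [admissibleCount, Bool.false_eq_true, iff_true, iff_false, not_not] at h₁ h₂ ⊢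
  · rw [line_eq_of_mem hyz hzu h₂, line_eq_of_mem hxy hyz h₁, Set.union_self, Set.union_self,
      ncard_projectivization_of_finrank_two (finrank_line hxy)] at htotal
    linear_combination htotal
  · have hne : line x y ≠ line z u := fun h =>
      h₂ (line_eq_of_mem hxy hyz h₁ ▸ h ▸ right_mem_line z u)
    rw [line_eq_of_mem hxy hyz h₁, Set.union_self,
      ncard_union_of_ne hV (finrank_line hxy) (finrank_line hzu) hne] at htotal
    zify [hq] at htotal ⊢
    linear_combination htotal
  · have hne : line x y ≠ line y z := fun h => h₁ (h ▸ right_mem_line y z)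
    rw [line_eq_of_mem hyz hzu h₂, Set.union_assoc, Set.union_self,
      ncard_union_of_ne hV (finrank_line hxy) (finrank_line hyz) hne] at htotal
    zify [hq] at htotal ⊢
    linear_combination htotal
  · rw [ncard_union_lines_of_independent hV ((independent_triple_iff hxy).2 h₁)
      ((independent_triple_iff hyz).2 h₂)] at htotal
    zify [hq] at htotal ⊢
    linear_combination htotal

end Finite

end Projectivization

namespace ZMod

variable {m : ℕ}

theorem exists_natCast_eq_of_pos (hm : 0 < m) (j : ZMod m) :
    ∃ k : ℕ, 1 ≤ k ∧ k ≤ m ∧ (k : ZMod m) = j := by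
  have : NeZero m := ⟨hm.ne'⟩
  by_cases hj : j = 0
  · exact ⟨m, hm, le_rfl, by rw [ZMod.natCast_self, hj]⟩
  · exact ⟨j.val, Nat.pos_of_ne_zero ((ZMod.val_ne_zero j).2 hj), (ZMod.val_lt j).le,
      ZMod.natCast_zmod_val j⟩

theorem natCast_add_self (k n : ℕ) : ((k + n : ℕ) : ZMod n) = k := by simp

end ZMod

namespace FriezeCount

open Projectivization ZMod

section Cyclic

variable {α : Type*} {m : ℕ}

-- `p` becomes the point `v_{m+1}`, stored at index `0` of `ZMod (m + 1)`; dually `cycInit`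
-- reads `v_m` into index `0` of `ZMod m`.
def cycSnoc (w : ZMod m → α) (p : α) : ZMod (m + 1) → α :=
  fun i => if i = 0 then p else w i.val

def cycInit (v : ZMod (m + 1) → α) : ZMod m → α :=
  fun j => v (if j = 0 then m else j.val : ℕ)

theorem cycSnoc_zero (w : ZMod m → α) (p : α) : cycSnoc w p 0 = p := if_pos rfl

theorem cycSnoc_natCast (w : ZMod m → α) (p : α) {k : ℕ} (hk : 1 ≤ k) (hkm : k ≤ m) :
    cycSnoc w p k = w k := by
  have hval : (k : ZMod (m + 1)).val = k := ZMod.val_cast_of_lt (by omega)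
  rw [cycSnoc, if_neg fun h => by rw [h, ZMod.val_zero] at hval; omega, hval]

theorem cycInit_natCast (v : ZMod (m + 1) → α) {k : ℕ} (hk : 1 ≤ k) (hkm : k ≤ m) :
    cycInit v k = v k := by
  rw [cycInit]
  rcases hkm.eq_or_lt with rfl | hlt
  · rw [if_pos (ZMod.natCast_self k)]
  · have hne : (k : ZMod m) ≠ 0 := fun h =>
      absurd (Nat.le_of_dvd hk ((ZMod.natCast_eq_zero_iff k m).1 h)) (by omega)
    rw [if_neg hne, ZMod.val_cast_of_lt hlt]

def cycSnocEquiv (hm : 0 < m) : (ZMod m → α) × α ≃ (ZMod (m + 1) → α) where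
  toFun x := cycSnoc x.1 x.2
  invFun v := (cycInit v, v 0)
  left_inv := fun ⟨w, p⟩ => by
    refine Prod.ext (funext fun j => ?_) (cycSnoc_zero w p)
    dsimp only
    obtain ⟨k, hk, hkm, rfl⟩ := exists_natCast_eq_of_pos hm j
    rw [cycInit_natCast _ hk hkm, cycSnoc_natCast _ _ hk hkm]
  right_inv v := funext fun i => by
    dsimp only
    obtain ⟨k, hk, hkm, rfl⟩ := exists_natCast_eq_of_pos m.succ_pos i
    rcases hkm.eq_or_lt with rfl | hlt
    · rw [ZMod.natCast_self, cycSnoc_zero]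
    · rw [cycSnoc_natCast _ _ hk (by omega), cycInit_natCast _ hk (by omega)]

def cycReverse (w : ZMod m → α) : ZMod m → α := fun j => w (1 - j)

theorem cycReverse_involutive : Function.Involutive (cycReverse : (ZMod m → α) → ZMod m → α) :=
  fun w => funext fun j => by simp [cycReverse]

end Cyclic

variable {K : Type} [Field K]

theorem tripleIndep_iff_of_eq {n i : ℕ} {v : ZMod n → ℙ K (Fin 3 → K)} {a b c : ℙ K (Fin 3 → K)}
    (ha : v i = a) (hb : v (i + 1 : ℕ) = b) (hc : v (i + 2 : ℕ) = c) :
    tripleIndep K n v i ↔ Independent ![a, b, c] := by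
  refine Iff.of_eq (congrArg _ (funext fun t => ?_))
  fin_cases t
  exacts [ha, hb, hc]

theorem mem_Ccal_iff {n : ℕ} (hn : 0 < n) (v : ZMod n → ℙ K (Fin 3 → K)) :
    v ∈ Ccal K 3 n ↔ ∀ i, 1 ≤ i → i ≤ n → tripleIndep K n v i := by
  have key (i : ℕ) : tripleIndep K n v i ↔
      Independent fun t : Fin 3 => v ((i : ZMod n) + ((t : ℕ) : ZMod n)) := by
    simp only [tripleIndep, Nat.cast_add]
  refine ⟨fun h i _ _ => (key i).2 (h i), fun h j => ?_⟩
  obtain ⟨k, hk, hkn, rfl⟩ := exists_natCast_eq_of_pos hn j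
  exact (key k).1 (h k hk hkn)

section CycSnoc

variable {m : ℕ} (w : ZMod m → ℙ K (Fin 3 → K)) (p : ℙ K (Fin 3 → K))

theorem tripleIndep_cycSnoc_of_le {i : ℕ} (hi : 1 ≤ i) (him : i + 2 ≤ m) :
    tripleIndep K (m + 1) (cycSnoc w p) i ↔ tripleIndep K m w i :=
  Iff.of_eq (congrArg _ (funext fun t => cycSnoc_natCast w p (by omega) (by omega)))

theorem tripleIndep_cycSnoc_sub_one (hm : 2 ≤ m) :
    tripleIndep K (m + 1) (cycSnoc w p) (m - 1) ↔ Independent ![w (m - 1 : ℕ), w m, p] :=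
  tripleIndep_iff_of_eq (cycSnoc_natCast w p (by omega) (by omega))
    (by rw [Nat.sub_add_cancel (by omega : 1 ≤ m)]; exact cycSnoc_natCast w p (by omega) le_rfl)
    (by rw [show m - 1 + 2 = m + 1 by omega, ZMod.natCast_self, cycSnoc_zero])

theorem tripleIndep_cycSnoc_self (hm : 1 ≤ m) :
    tripleIndep K (m + 1) (cycSnoc w p) m ↔ Independent ![w m, p, w (1 : ℕ)] :=
  tripleIndep_iff_of_eq (cycSnoc_natCast w p hm le_rfl)
    (by rw [ZMod.natCast_self, cycSnoc_zero])
    (by rw [show m + 2 = 1 + (m + 1) by omega, natCast_add_self, cycSnoc_natCast w p le_rfl hm])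

theorem tripleIndep_cycSnoc_succ (hm : 2 ≤ m) :
    tripleIndep K (m + 1) (cycSnoc w p) (m + 1) ↔ Independent ![p, w (1 : ℕ), w (2 : ℕ)] :=
  tripleIndep_iff_of_eq (by rw [ZMod.natCast_self, cycSnoc_zero])
    (by rw [show m + 1 + 1 = 1 + (m + 1) by omega, natCast_add_self,
      cycSnoc_natCast w p le_rfl (by omega)])
    (by rw [show m + 1 + 2 = 2 + (m + 1) by omega, natCast_add_self,
      cycSnoc_natCast w p (by omega) hm])

end CycSnoc

section Wrap

variable {m : ℕ} (w : ZMod m → ℙ K (Fin 3 → K))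

theorem tripleIndep_sub_one (hm : 2 ≤ m) :
    tripleIndep K m w (m - 1) ↔ Independent ![w (m - 1 : ℕ), w m, w (1 : ℕ)] :=
  tripleIndep_iff_of_eq rfl (by rw [Nat.sub_add_cancel (by omega : 1 ≤ m)])
    (by rw [show m - 1 + 2 = 1 + m by omega, natCast_add_self])

theorem tripleIndep_self :
    tripleIndep K m w m ↔ Independent ![w m, w (1 : ℕ), w (2 : ℕ)] :=
  tripleIndep_iff_of_eq rfl (by rw [add_comm, natCast_add_self])
    (by rw [add_comm, natCast_add_self])

end Wrap

def insertionPoints {m : ℕ} (w : ZMod m → ℙ K (Fin 3 → K)) : Set (ℙ K (Fin 3 → K)) :=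
  admissible (w (m - 1 : ℕ)) (w m) (w (1 : ℕ)) (w (2 : ℕ))

variable (K) in
def C3sUnion (m : ℕ) : Set (ZMod m → ℙ K (Fin 3 → K)) :=
  {w | w m ≠ w (1 : ℕ) ∧ ∀ i : ℕ, 1 ≤ i → i ≤ m - 2 → tripleIndep K m w i}

theorem mem_C3s_iff {m : ℕ} {s₁ s₂ : Bool} {w : ZMod m → ℙ K (Fin 3 → K)} :
    w ∈ C3s K m s₁ s₂ ↔ w ∈ C3sUnion K m ∧
      (tripleIndep K m w (m - 1) ↔ s₁ = true) ∧ (tripleIndep K m w m ↔ s₂ = true) := by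
  simp only [C3s, C3sUnion, Set.mem_ofPred_eq, and_assoc]

theorem mem_Ccal_cycSnoc_iff {m : ℕ} (hm : 3 ≤ m) (w : ZMod m → ℙ K (Fin 3 → K))
    (p : ℙ K (Fin 3 → K)) :
    cycSnoc w p ∈ Ccal K 3 (m + 1) ↔ w ∈ C3sUnion K m ∧ p ∈ insertionPoints w := by
  rw [mem_Ccal_iff m.succ_pos, C3sUnion, insertionPoints, admissible, Set.mem_ofPred_eq,
    Set.mem_ofPred_eq, ← tripleIndep_cycSnoc_sub_one w p (by omega),
    ← tripleIndep_cycSnoc_self w p (by omega),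
    ← tripleIndep_cycSnoc_succ w p (by omega)]
  constructor
  · intro h
    refine ⟨⟨?_, fun i hi him => (tripleIndep_cycSnoc_of_le w p hi (by omega)).1
      (h i hi (by omega))⟩, h _ (by omega) (by omega), h m (by omega) (by omega),
      h _ (by omega) le_rfl⟩
    exact ((tripleIndep_cycSnoc_self w p (by omega)).1 (h m (by omega) (by omega))).injective.ne
      (by decide : (0 : Fin 3) ≠ 2)
  · rintro ⟨⟨-, hinner⟩, h₁, h₂, h₃⟩ i hi him
    rcases (by omega : i ≤ m - 2 ∨ i = m - 1 ∨ i = m ∨ i = m + 1) with h | rfl | rfl | rfl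
    · exact (tripleIndep_cycSnoc_of_le w p hi (by omega)).2 (hinner i hi h)
    exacts [h₁, h₂, h₃]

theorem ncard_insertionPoints_of_mem_C3s [Finite K] {m : ℕ} (hm : 3 ≤ m) {s₁ s₂ : Bool}
    {w : ZMod m → ℙ K (Fin 3 → K)} (hw : w ∈ C3s K m s₁ s₂) :
    (insertionPoints w).ncard = admissibleCount (Nat.card K) s₁ s₂ := by
  obtain ⟨⟨hne, hinner⟩, h₁, h₂⟩ := mem_C3s_iff.1 hw
  have hleft : Independent ![w (m - 2 : ℕ), w (m - 1 : ℕ), w m] :=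
    (tripleIndep_iff_of_eq rfl (by rw [show m - 2 + 1 = m - 1 by omega])
      (by rw [Nat.sub_add_cancel (by omega : 2 ≤ m)])).1 (hinner (m - 2) (by omega) le_rfl)
  have hright : Independent ![w (1 : ℕ), w (2 : ℕ), w (3 : ℕ)] :=
    (tripleIndep_iff_of_eq rfl rfl rfl).1 (hinner 1 le_rfl (by omega))
  exact ncard_admissible (Module.finrank_fin_fun K)
    (hleft.injective.ne (by decide : (1 : Fin 3) ≠ 2)) hne
    (hright.injective.ne (by decide : (0 : Fin 3) ≠ 1))
    ((tripleIndep_sub_one w (by omega)).symm.trans h₁) ((tripleIndep_self w).symm.trans h₂)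

theorem card_insertionPoints_eq_sum [Finite K] {m : ℕ} (hm : 3 ≤ m)
    (w : ZMod m → ℙ K (Fin 3 → K)) :
    Nat.card {p // w ∈ C3sUnion K m ∧ p ∈ insertionPoints w} =
      ∑ s : Bool × Bool,
        if w ∈ C3s K m s.1 s.2 then admissibleCount (Nat.card K) s.1 s.2 else 0 := by
  by_cases hw : w ∈ C3sUnion K m
  · have hclass (s : Bool × Bool) : w ∈ C3s K m s.1 s.2 ↔
        (decide (tripleIndep K m w (m - 1)), decide (tripleIndep K m w m)) = s := by
      obtain ⟨s₁, s₂⟩ := s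
      simp only [mem_C3s_iff, hw, true_and, Prod.mk.injEq]
      cases s₁ <;> cases s₂ <;> simp
    simp_rw [hclass, Fintype.sum_ite_eq]
    rw [Nat.card_congr (Equiv.subtypeEquivRight fun p => and_iff_right hw), Nat.card_coe_set_eq]
    exact ncard_insertionPoints_of_mem_C3s hm ((hclass _).2 rfl)
  · rw [Finset.sum_eq_zero fun s _ => if_neg fun h => hw (mem_C3s_iff.1 h).1]
    exact Nat.card_eq_zero.2 (Or.inl ⟨fun p => hw p.2.1⟩)

theorem card_Ccal_succ [Finite K] {m : ℕ} (hm : 3 ≤ m) :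
    Nat.card (Ccal K 3 (m + 1)) =
      ∑ s : Bool × Bool, Nat.card (C3s K m s.1 s.2) * admissibleCount (Nat.card K) s.1 s.2 := by
  have : NeZero m := ⟨by omega⟩
  have := Fintype.ofFinite (ℙ K (Fin 3 → K))
  calc Nat.card (Ccal K 3 (m + 1))
      = Nat.card {x : (ZMod m → ℙ K (Fin 3 → K)) × ℙ K (Fin 3 → K) //
          x.1 ∈ C3sUnion K m ∧ x.2 ∈ insertionPoints x.1} :=
        Nat.card_congr ((cycSnocEquiv (by omega)).subtypeEquiv
          fun x => (mem_Ccal_cycSnoc_iff hm x.1 x.2).symm).symm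
    _ = ∑ w, Nat.card {p // w ∈ C3sUnion K m ∧ p ∈ insertionPoints w} := by
        rw [Nat.card_congr (Equiv.subtypeProdEquivSigmaSubtype fun w p =>
          w ∈ C3sUnion K m ∧ p ∈ insertionPoints w), Nat.card_sigma]
    _ = ∑ s : Bool × Bool, ∑ w,
          if w ∈ C3s K m s.1 s.2 then admissibleCount (Nat.card K) s.1 s.2 else 0 := by
        simp_rw [card_insertionPoints_eq_sum hm]
        exact Finset.sum_comm
    _ = ∑ s : Bool × Bool, Nat.card (C3s K m s.1 s.2) * admissibleCount (Nat.card K) s.1 s.2 := by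
        simp [Finset.sum_ite, Nat.card_eq_fintype_card, Fintype.card_subtype]

theorem tripleIndep_cycReverse {n j k : ℕ} (w : ZMod n → ℙ K (Fin 3 → K))
    (h : ((j + k + 1 : ℕ) : ZMod n) = 0) :
    tripleIndep K n (cycReverse w) j ↔ tripleIndep K n w k := by
  rw [tripleIndep_iff_of_eq rfl rfl rfl (v := w), independent_reverse_iff]
  push_cast at h
  refine tripleIndep_iff_of_eq ?_ ?_ ?_ <;> simp only [cycReverse] <;> congr 1 <;> push_cast <;>
    linear_combination -h

theorem cycReverse_mem_C3s {m : ℕ} (hm : 3 ≤ m) {s₁ s₂ : Bool} {w : ZMod m → ℙ K (Fin 3 → K)}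
    (hw : w ∈ C3s K m s₁ s₂) : cycReverse w ∈ C3s K m s₂ s₁ := by
  obtain ⟨hne, hinner, h₁, h₂⟩ := hw
  have hdouble : ((m + m : ℕ) : ZMod m) = 0 := by rw [natCast_add_self, ZMod.natCast_self]
  refine ⟨?_, fun i hi him => (tripleIndep_cycReverse w (k := m - 1 - i) ?_).2
    (hinner _ (by omega) (by omega)), (tripleIndep_cycReverse w ?_).trans h₂,
    (tripleIndep_cycReverse w ?_).trans h₁⟩
  · simp only [cycReverse, ZMod.natCast_self, Nat.cast_one, sub_zero, sub_self] at hne ⊢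
    exact hne.symm
  · rw [show i + (m - 1 - i) + 1 = m by omega, ZMod.natCast_self]
  · rwa [show m - 1 + m + 1 = m + m by omega]
  · rwa [show m + (m - 1) + 1 = m + m by omega]

theorem card_C3s_comm {m : ℕ} (hm : 3 ≤ m) (s₁ s₂ : Bool) :
    Nat.card (C3s K m s₁ s₂) = Nat.card (C3s K m s₂ s₁) :=
  Nat.card_congr <| (cycReverse_involutive.toPerm _).subtypeEquiv fun w =>
    ⟨cycReverse_mem_C3s hm, fun h => cycReverse_involutive w ▸ cycReverse_mem_C3s hm h⟩

theorem C3s_true_true {m : ℕ} (hm : 3 ≤ m) : C3s K m true true = Ccal K 3 m := by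
  ext w
  rw [mem_C3s_iff, mem_Ccal_iff (by omega), C3sUnion, Set.mem_ofPred_eq]
  simp only [iff_true]
  constructor
  · rintro ⟨⟨-, hinner⟩, h₁, h₂⟩ i hi him
    rcases (by omega : i ≤ m - 2 ∨ i = m - 1 ∨ i = m) with h | rfl | rfl
    exacts [hinner i hi h, h₁, h₂]
  · intro h
    refine ⟨⟨?_, fun i hi him => h i hi (by omega)⟩, h _ (by omega) (by omega),
      h m (by omega) le_rfl⟩
    exact ((tripleIndep_self w).1 (h m (by omega) le_rfl)).injective.ne
      (by decide : (0 : Fin 3) ≠ 1)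

/-- for `n ≥ 4`,
`c_3(n) = (q-1)^2 c_3(n-1) + 2q(q-1) c_3^{+-}(n-1) + q^2 c_3^{--}(n-1)`. -/
theorem card_C3_recursion
    (K : Type) [Field K] [Fintype K] (q : ℕ) (hq : Fintype.card K = q)
    (n : ℕ) (hn : 4 ≤ n) :
    Nat.card ↥(Ccal K 3 n)
      = (q - 1) ^ 2 * Nat.card ↥(Ccal K 3 (n - 1))
        + 2 * q * (q - 1) * Nat.card ↥(C3s K (n - 1) true false)
        + q ^ 2 * Nat.card ↥(C3s K (n - 1) false false) := by
  obtain ⟨m, rfl⟩ : ∃ m, n = m + 1 := ⟨n - 1, by omega⟩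
  have hm : 3 ≤ m := by omega
  rw [card_Ccal_succ hm, Nat.add_sub_cancel, Fintype.sum_prod_type, Fintype.sum_bool,
    Fintype.sum_bool, Fintype.sum_bool, C3s_true_true hm, card_C3s_comm hm false true,
    Nat.card_eq_fintype_card (α := K), hq]
  simp only [admissibleCount]
  ring

end FriezeCount
end
end
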